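/- arXiv:2509.12848 — 4 statements merged into one kernel-verified Lean document; each statement's English description precedes it below -/
import Mathlib

section
/- Lipschitz regularity of subsolutions: assume the steady assumptions and, in addition, that for each 1 ≤ i ≤ N either H_i satisfies (Hcoercive) on closure(E_i), or there exists a̲_i > 0 such that a_i ≥ a̲_i on closure(E_i). Then every bounded viscosity subsolution u of problem (P) is Lipschitz continuous on the set Γ^δ := { x ∈ Γ : ρ(x, v_i) > δ for all 1 ≤ i ≤ N } for every δ > 0, with a Lipschitz constant (with respect to the geodesic distance ρ) depending only on δ, ‖u‖_∞ and the data. -/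
open Set Filter Topology

namespace Paper

/-- Data of the junction problem (P): a junction with `N` edges of lengths `ℓ i`,
glued at the junction point `O` (parameter `0` of each edge), with a (possibly
degenerate) diffusion `a i`, Hamiltonians `H i`, a Kirchhoff nonlinearity `F`,
Dirichlet data `h i` and a constant `lam > 0`.  Functions on the junction `Γ`
are represented edge-wise: `u : Fin N → ℝ → ℝ`, where only the values of
`u i` on `[0, ℓ i]` are relevant and `u i 0` represents the value at `O`. -/
structure Data (N : ℕ) where
  ℓ : Fin N → ℝ
  ℓ_pos : ∀ i, 0 < ℓ i
  lam : ℝ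
  lam_pos : 0 < lam
  a : Fin N → ℝ → ℝ
  a_nonneg : ∀ i, ∀ t ∈ Set.Icc (0:ℝ) (ℓ i), 0 ≤ a i t
  a_cont : ∀ i, ContinuousOn (a i) (Set.Icc 0 (ℓ i))
  H : Fin N → ℝ → ℝ → ℝ
  H_cont : ∀ i, ContinuousOn (fun q : ℝ × ℝ => H i q.1 q.2)
      ((Set.Icc 0 (ℓ i)) ×ˢ (Set.univ : Set ℝ))
  F : ℝ → (Fin N → ℝ) → ℝ
  F_cont : Continuous (fun q : ℝ × (Fin N → ℝ) => F q.1 q.2)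
  h : Fin N → ℝ

variable {N : ℕ}

/-- A family of edge functions defines a function on `Γ`: values at `O` agree. -/
def Glued (u : Fin N → ℝ → ℝ) : Prop := ∀ i j : Fin N, u i 0 = u j 0

/-- `u ∈ USC(Γ)`. -/
def IsUSC (D : Data N) (u : Fin N → ℝ → ℝ) : Prop :=
  ∀ i, UpperSemicontinuousOn (u i) (Set.Icc 0 (D.ℓ i))

/-- `u ∈ LSC(Γ)`. -/
def IsLSC (D : Data N) (u : Fin N → ℝ → ℝ) : Prop :=
  ∀ i, LowerSemicontinuousOn (u i) (Set.Icc 0 (D.ℓ i))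

/-- Test functions in `C²(Γ)` (edge-wise C², glued at `O`). -/
def IsTest (φ : Fin N → ℝ → ℝ) : Prop :=
  Glued φ ∧ ∀ i, ContDiff ℝ 2 (φ i)

/-- `G_i(r,p,X,x) = λ r − a_i(x) X + H_i(x,p)`. -/
def G (D : Data N) (i : Fin N) (r p X t : ℝ) : ℝ :=
  D.lam * r - D.a i t * X + D.H i t p

/-- Local maximum point of an edge-wise function at an interior edge point. -/
def LocalMaxEdge (D : Data N) (w : Fin N → ℝ → ℝ) (i : Fin N) (t : ℝ) : Prop :=
  ∃ δ > 0, ∀ s ∈ Set.Icc (0:ℝ) (D.ℓ i), |s - t| < δ → w i s ≤ w i t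

def LocalMinEdge (D : Data N) (w : Fin N → ℝ → ℝ) (i : Fin N) (t : ℝ) : Prop :=
  ∃ δ > 0, ∀ s ∈ Set.Icc (0:ℝ) (D.ℓ i), |s - t| < δ → w i t ≤ w i s

/-- Local maximum point at the junction point `O`. -/
def LocalMaxO (D : Data N) (w : Fin N → ℝ → ℝ) : Prop :=
  ∃ δ > 0, ∀ j, ∀ s ∈ Set.Icc (0:ℝ) (D.ℓ j), s < δ → w j s ≤ w j 0

def LocalMinO (D : Data N) (w : Fin N → ℝ → ℝ) : Prop :=
  ∃ δ > 0, ∀ j, ∀ s ∈ Set.Icc (0:ℝ) (D.ℓ j), s < δ → w j 0 ≤ w j s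

/-- Local maximum point at the boundary vertex `v_i` (parameter `ℓ i`). -/
def LocalMaxVert (D : Data N) (w : Fin N → ℝ → ℝ) (i : Fin N) : Prop :=
  ∃ δ > 0, ∀ s ∈ Set.Icc (0:ℝ) (D.ℓ i), D.ℓ i - s < δ → w i s ≤ w i (D.ℓ i)

def LocalMinVert (D : Data N) (w : Fin N → ℝ → ℝ) (i : Fin N) : Prop :=
  ∃ δ > 0, ∀ s ∈ Set.Icc (0:ℝ) (D.ℓ i), D.ℓ i - s < δ → w i (D.ℓ i) ≤ w i s

/-- Viscosity subsolution of problem (P), junction viscosity sense. -/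
def IsSubsol (D : Data N) (u : Fin N → ℝ → ℝ) : Prop :=
  IsUSC D u ∧ Glued u ∧
  ∀ φ : Fin N → ℝ → ℝ, IsTest φ →
    ((∀ i, ∀ t ∈ Set.Ioo (0:ℝ) (D.ℓ i),
        LocalMaxEdge D (fun j s => u j s - φ j s) i t →
        G D i (u i t) (deriv (φ i) t) (deriv (deriv (φ i)) t) t ≤ 0) ∧
     (LocalMaxO D (fun j s => u j s - φ j s) →
        (∃ i, G D i (u i 0) (deriv (φ i) 0) (deriv (deriv (φ i)) 0) 0 ≤ 0) ∨
        (∀ i, D.F (u i 0) (fun j => deriv (φ j) 0) ≤ 0)) ∧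
     (∀ i, LocalMaxVert D (fun j s => u j s - φ j s) i →
        G D i (u i (D.ℓ i)) (deriv (φ i) (D.ℓ i)) (deriv (deriv (φ i)) (D.ℓ i)) (D.ℓ i) ≤ 0 ∨
        u i (D.ℓ i) ≤ D.h i))

/-- Viscosity supersolution of problem (P), junction viscosity sense. -/
def IsSupersol (D : Data N) (v : Fin N → ℝ → ℝ) : Prop :=
  IsLSC D v ∧ Glued v ∧
  ∀ φ : Fin N → ℝ → ℝ, IsTest φ →
    ((∀ i, ∀ t ∈ Set.Ioo (0:ℝ) (D.ℓ i),
        LocalMinEdge D (fun j s => v j s - φ j s) i t →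
        0 ≤ G D i (v i t) (deriv (φ i) t) (deriv (deriv (φ i)) t) t) ∧
     (LocalMinO D (fun j s => v j s - φ j s) →
        (∃ i, 0 ≤ G D i (v i 0) (deriv (φ i) 0) (deriv (deriv (φ i)) 0) 0) ∨
        (∀ i, 0 ≤ D.F (v i 0) (fun j => deriv (φ j) 0))) ∧
     (∀ i, LocalMinVert D (fun j s => v j s - φ j s) i →
        0 ≤ G D i (v i (D.ℓ i)) (deriv (φ i) (D.ℓ i)) (deriv (deriv (φ i)) (D.ℓ i)) (D.ℓ i) ∨
        D.h i ≤ v i (D.ℓ i)))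

/-- Assumption (Ham) for the Hamiltonian `H i`, with constant `C`. -/
def Ham (D : Data N) (C : ℝ) (i : Fin N) : Prop :=
  (∀ t ∈ Set.Icc (0:ℝ) (D.ℓ i), ∀ s ∈ Set.Icc (0:ℝ) (D.ℓ i), ∀ p : ℝ,
      |D.H i t p - D.H i s p| ≤ C * (1 + |p|) * |t - s|) ∧
  (∀ t ∈ Set.Icc (0:ℝ) (D.ℓ i), ∀ p q : ℝ, |D.H i t p - D.H i t q| ≤ C * |p - q|)

/-- Assumption (Hcoercive) for `H i` on the set `S`, with constant `C`. -/
def Coercive (D : Data N) (C : ℝ) (i : Fin N) (S : Set ℝ) : Prop :=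
  ∀ t ∈ S, ∀ p : ℝ, C⁻¹ * |p| - C ≤ D.H i t p

/-- Assumption (hyp-diff) for the diffusion `a i`. -/
def HypDiff (D : Data N) (i : Fin N) : Prop :=
  ∃ σ : ℝ → ℝ, (∃ C : NNReal, LipschitzOnWith C σ (Set.Icc 0 (D.ℓ i))) ∧
    ∀ t ∈ Set.Icc (0:ℝ) (D.ℓ i), D.a i t = (σ t) ^ 2

/-- Assumption (hyp-kirch) for the Kirchhoff nonlinearity `F`. -/
def Kirchhoff (D : Data N) : Prop :=
  (∀ (r s : ℝ) (p q : Fin N → ℝ), s ≤ r → (∀ i, p i ≤ q i) → D.F s q ≤ D.F r p) ∧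
  (∀ (r s : ℝ) (p q : Fin N → ℝ), s ≤ r → (∀ i, p i ≤ q i) → (∃ j, p j < q j) →
      D.F s q < D.F r p) ∧
  (∀ (i : Fin N) (r : ℝ) (p : Fin N → ℝ),
      Filter.Tendsto (fun z : ℝ => D.F r (Function.update p i z))
        Filter.atBot Filter.atTop)

/-- The steady assumptions (2.9). -/
def Steady (D : Data N) (C : ℝ) : Prop :=
  0 < C ∧ (∀ i, Ham D C i) ∧ (∀ i, HypDiff D i) ∧
  (∀ i, D.a i 0 = 0 → Coercive D C i (Set.Icc 0 (D.ℓ i))) ∧ Kirchhoff D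

/-- Assumption (hyp-dir). -/
def HypDir (D : Data N) (C : ℝ) : Prop :=
  ∀ i, 0 < D.a i (D.ℓ i) ∨
    ∃ δ > 0, Coercive D C i (Set.Icc (D.ℓ i - δ) (D.ℓ i))

/-!
Fix a point `(b, tb)` of `Γ^δ` and compare `u` with `u(b, tb) + ψ`, where
`ψ = c₁ (1 - e^{-K |s - tb|})` on edge `b` and `ψ = c₁ (1 - e^{-K tb}) + c₂ (1 - e^{-K s})` on the
other edges; since `ψ ≤ max c₁ c₂ · K · ρ(·, (b, tb))`, this gives the Lipschitz bound. For `K`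
large and `c₂`, then `c₁`, large, a smoothing `φ` of the barrier is so steep and concave that
coercivity or uniform ellipticity makes every edge inequality fail for it, its very negative
slope on edge `b` at `O` makes the Kirchhoff inequality fail, and it exceeds the Dirichlet data at
the vertices. Hence a positive maximum of `u - φ` can only sit next to the peak `(b, tb)`, where
the upper semicontinuity of `u` rules it out.
-/

noncomputable section Profiles

def expProfile (c K z : ℝ) : ℝ := c * (1 - Real.exp (-(K * z)))

def expProfileDeriv (c K z : ℝ) : ℝ := c * K * Real.exp (-(K * z))

lemma hasDerivAt_neg_mul (K z : ℝ) : HasDerivAt (fun y => -(K * y)) (-K) z := by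
  simpa using (hasDerivAt_id' z).const_mul (-K)

lemma hasDerivAt_expProfile (c K z : ℝ) :
    HasDerivAt (expProfile c K) (expProfileDeriv c K z) z :=
  (((hasDerivAt_neg_mul K z).exp.const_sub 1).const_mul c).congr_deriv
    (by simp only [expProfileDeriv]; ring)

lemma hasDerivAt_expProfileDeriv (c K z : ℝ) :
    HasDerivAt (expProfileDeriv c K) (-K * expProfileDeriv c K z) z :=
  ((hasDerivAt_neg_mul K z).exp.const_mul (c * K)).congr_deriv
    (by simp only [expProfileDeriv]; ring)

lemma contDiff_expProfile (c K : ℝ) : ContDiff ℝ 2 (expProfile c K) := by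
  unfold expProfile; fun_prop

lemma expProfile_zero (c K : ℝ) : expProfile c K 0 = 0 := by simp [expProfile]

lemma expProfile_mono {c K : ℝ} (hc : 0 ≤ c) (hK : 0 ≤ K) : Monotone (expProfile c K) := by
  intro z w hzw
  have : Real.exp (-(K * w)) ≤ Real.exp (-(K * z)) := Real.exp_le_exp.2 (by nlinarith)
  unfold expProfile
  nlinarith

lemma expProfile_nonneg {c K z : ℝ} (hc : 0 ≤ c) (hK : 0 ≤ K) (hz : 0 ≤ z) :
    0 ≤ expProfile c K z :=
  expProfile_zero c K ▸ expProfile_mono hc hK hz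

lemma expProfile_le_mul {c K z : ℝ} (hc : 0 ≤ c) : expProfile c K z ≤ c * K * z := by
  have := Real.add_one_le_exp (-(K * z))
  unfold expProfile
  nlinarith

lemma expProfileDeriv_pos {c K : ℝ} (hc : 0 < c) (hK : 0 < K) (z : ℝ) :
    0 < expProfileDeriv c K z := by
  unfold expProfileDeriv; positivity

lemma expProfileDeriv_zero (c K : ℝ) : expProfileDeriv c K 0 = c * K := by
  simp [expProfileDeriv]

lemma le_expProfileDeriv {c K z R : ℝ} (hc : 0 ≤ c) (hK : 0 ≤ K) (hz : z ≤ R) :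
    c * K * Real.exp (-(K * R)) ≤ expProfileDeriv c K z :=
  mul_le_mul_of_nonneg_left (Real.exp_le_exp.2 (by nlinarith)) (mul_nonneg hc hK)

def smoothAbs (ε z : ℝ) : ℝ := Real.sqrt (z ^ 2 + ε ^ 2) - ε

def smoothAbsDeriv (ε z : ℝ) : ℝ := z / Real.sqrt (z ^ 2 + ε ^ 2)

def smoothAbsDeriv2 (ε z : ℝ) : ℝ := ε ^ 2 / ((z ^ 2 + ε ^ 2) * Real.sqrt (z ^ 2 + ε ^ 2))

lemma smoothAbs_zero_left (z : ℝ) : smoothAbs 0 z = |z| := by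
  simp [smoothAbs, Real.sqrt_sq_eq_abs]

lemma smoothAbs_neg (ε z : ℝ) : smoothAbs ε (-z) = smoothAbs ε z := by simp [smoothAbs]

lemma smoothAbs_le_abs {ε : ℝ} (hε : 0 ≤ ε) (z : ℝ) : smoothAbs ε z ≤ |z| := by
  have : Real.sqrt (z ^ 2 + ε ^ 2) ≤ |z| + ε :=
    (Real.sqrt_le_left (by positivity)).2 (by nlinarith [sq_abs z, abs_nonneg z])
  unfold smoothAbs; linarith

lemma abs_sub_le_smoothAbs (ε z : ℝ) : |z| - ε ≤ smoothAbs ε z := by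
  have : Real.sqrt (z ^ 2) ≤ Real.sqrt (z ^ 2 + ε ^ 2) := Real.sqrt_le_sqrt (by nlinarith)
  rw [Real.sqrt_sq_eq_abs] at this
  unfold smoothAbs; linarith

lemma smoothAbs_nonneg {ε : ℝ} (hε : 0 ≤ ε) (z : ℝ) : 0 ≤ smoothAbs ε z := by
  have : Real.sqrt (ε ^ 2) ≤ Real.sqrt (z ^ 2 + ε ^ 2) := Real.sqrt_le_sqrt (by nlinarith)
  rw [Real.sqrt_sq hε] at this
  unfold smoothAbs; linarith

lemma sq_add_sq_pos {ε : ℝ} (hε : ε ≠ 0) (z : ℝ) : 0 < z ^ 2 + ε ^ 2 := by positivity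

lemma sqrt_sq_add_sq_pos {ε : ℝ} (hε : ε ≠ 0) (z : ℝ) : 0 < Real.sqrt (z ^ 2 + ε ^ 2) :=
  Real.sqrt_pos.2 (sq_add_sq_pos hε z)

lemma hasDerivAt_smoothAbs {ε : ℝ} (hε : ε ≠ 0) (z : ℝ) :
    HasDerivAt (smoothAbs ε) (smoothAbsDeriv ε z) z := by
  have hq : HasDerivAt (fun z : ℝ => z ^ 2 + ε ^ 2) (2 * z) z := by
    simpa using (hasDerivAt_pow 2 z).add_const (ε ^ 2)
  refine ((hq.sqrt (sq_add_sq_pos hε z).ne').sub_const ε).congr_deriv ?_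
  have := (sqrt_sq_add_sq_pos hε z).ne'
  simp only [smoothAbsDeriv]; field_simp

lemma hasDerivAt_smoothAbsDeriv {ε : ℝ} (hε : ε ≠ 0) (z : ℝ) :
    HasDerivAt (smoothAbsDeriv ε) (smoothAbsDeriv2 ε z) z := by
  have hq : HasDerivAt (fun z : ℝ => z ^ 2 + ε ^ 2) (2 * z) z := by
    simpa using (hasDerivAt_pow 2 z).add_const (ε ^ 2)
  have hpos := sqrt_sq_add_sq_pos hε z
  refine ((hasDerivAt_id z).div (hq.sqrt (sq_add_sq_pos hε z).ne') hpos.ne').congr_deriv ?_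
  have hsq : Real.sqrt (z ^ 2 + ε ^ 2) ^ 2 = z ^ 2 + ε ^ 2 := Real.sq_sqrt (by positivity)
  rw [smoothAbsDeriv2, hsq, id]
  field_simp
  linear_combination hsq

lemma contDiff_smoothAbs {ε : ℝ} (hε : ε ≠ 0) : ContDiff ℝ 2 (smoothAbs ε) := by
  rw [contDiff_iff_contDiffAt]
  intro z
  have hq : ContDiff ℝ 2 (fun z : ℝ => z ^ 2 + ε ^ 2) := by fun_prop
  exact ((Real.contDiffAt_sqrt (sq_add_sq_pos hε z).ne').comp z hq.contDiffAt).sub contDiffAt_const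

lemma abs_smoothAbsDeriv_le_one {ε : ℝ} (hε : ε ≠ 0) (z : ℝ) : |smoothAbsDeriv ε z| ≤ 1 := by
  have hpos := sqrt_sq_add_sq_pos hε z
  simp only [smoothAbsDeriv]
  rw [abs_div, abs_of_pos hpos, div_le_one hpos, ← Real.sqrt_sq_eq_abs]
  exact Real.sqrt_le_sqrt (by nlinarith)

lemma one_half_le_abs_smoothAbsDeriv {ε z : ℝ} (hε : ε ≠ 0) (h : |ε| ≤ |z|) :
    1 / 2 ≤ |smoothAbsDeriv ε z| := by
  have hpos := sqrt_sq_add_sq_pos hε z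
  have : Real.sqrt (z ^ 2 + ε ^ 2) ≤ 2 * |z| :=
    (Real.sqrt_le_left (by positivity)).2 (by nlinarith [sq_abs z, sq_abs ε, abs_nonneg ε])
  simp only [smoothAbsDeriv]
  rw [abs_div, abs_of_pos hpos, le_div_iff₀ hpos]
  linarith

lemma smoothAbsDeriv_neg {ε z : ℝ} (hε : ε ≠ 0) (hz : z < 0) : smoothAbsDeriv ε z < 0 :=
  div_neg_of_neg_of_pos hz (sqrt_sq_add_sq_pos hε z)

lemma smoothAbsDeriv2_le {ε z : ℝ} (hε : ε ≠ 0) (hz : z ≠ 0) :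
    smoothAbsDeriv2 ε z ≤ ε ^ 2 / |z| ^ 3 := by
  have h1 : |z| ^ 2 ≤ z ^ 2 + ε ^ 2 := by rw [sq_abs]; exact le_add_of_nonneg_right (sq_nonneg ε)
  have h2 : |z| ≤ Real.sqrt (z ^ 2 + ε ^ 2) := Real.le_sqrt_of_sq_le h1
  have : |z| ^ 3 ≤ (z ^ 2 + ε ^ 2) * Real.sqrt (z ^ 2 + ε ^ 2) := by
    rw [pow_succ]; exact mul_le_mul h1 h2 (by positivity) (by positivity)
  exact div_le_div_of_nonneg_left (by positivity) (by positivity) this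

def peakProfile (c K ε z : ℝ) : ℝ := expProfile c K (smoothAbs ε z)

def peakProfileDeriv (c K ε z : ℝ) : ℝ :=
  expProfileDeriv c K (smoothAbs ε z) * smoothAbsDeriv ε z

def peakProfileDeriv2 (c K ε z : ℝ) : ℝ :=
  -K * expProfileDeriv c K (smoothAbs ε z) * smoothAbsDeriv ε z ^ 2 +
    expProfileDeriv c K (smoothAbs ε z) * smoothAbsDeriv2 ε z

lemma hasDerivAt_peakProfile (c K : ℝ) {ε : ℝ} (hε : ε ≠ 0) (z : ℝ) :
    HasDerivAt (peakProfile c K ε) (peakProfileDeriv c K ε z) z :=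
  (hasDerivAt_expProfile c K _).comp z (hasDerivAt_smoothAbs hε z)

lemma hasDerivAt_peakProfileDeriv (c K : ℝ) {ε : ℝ} (hε : ε ≠ 0) (z : ℝ) :
    HasDerivAt (peakProfileDeriv c K ε) (peakProfileDeriv2 c K ε z) z := by
  refine (((hasDerivAt_expProfileDeriv c K _).comp z (hasDerivAt_smoothAbs hε z)).mul
    (hasDerivAt_smoothAbsDeriv hε z)).congr_deriv ?_
  simp only [peakProfileDeriv2, Function.comp_apply]
  ring

lemma contDiff_peakProfile (c K : ℝ) {ε : ℝ} (hε : ε ≠ 0) : ContDiff ℝ 2 (peakProfile c K ε) :=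
  (contDiff_expProfile c K).comp (contDiff_smoothAbs hε)

lemma steep_expProfile {c K R z : ℝ} (hc : 0 < c) (hK : 0 < K) (hz : z ≤ R) :
    c * K * Real.exp (-(K * R)) ≤ |expProfileDeriv c K z| ∧
      -K * expProfileDeriv c K z ≤ -(K / 8) * |expProfileDeriv c K z| := by
  have hpos := expProfileDeriv_pos hc hK z
  rw [abs_of_pos hpos]
  exact ⟨le_expProfileDeriv hc.le hK.le hz, by nlinarith⟩

lemma steep_peakProfile {c K R ε r z : ℝ} (hc : 0 < c) (hK : 0 < K) (hε : 0 < ε) (hεr : ε ≤ r)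
    (hεK : ε ^ 2 ≤ K / 8 * r ^ 3) (hr : r ≤ |z|) (hzR : |z| ≤ R) :
    c * K * Real.exp (-(K * R)) ≤ 2 * |peakProfileDeriv c K ε z| ∧
      peakProfileDeriv2 c K ε z ≤ -(K / 8) * |peakProfileDeriv c K ε z| := by
  set y := expProfileDeriv c K (smoothAbs ε z)
  set a := smoothAbsDeriv ε z
  have hy : 0 < y := expProfileDeriv_pos hc hK _
  have hyR : c * K * Real.exp (-(K * R)) ≤ y :=
    le_expProfileDeriv hc.le hK.le ((smoothAbs_le_abs hε.le z).trans hzR)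
  have ha : 1 / 2 ≤ |a| :=
    one_half_le_abs_smoothAbsDeriv hε.ne' ((abs_of_pos hε).trans_le (hεr.trans hr))
  have ha1 : |a| ≤ 1 := abs_smoothAbsDeriv_le_one hε.ne' z
  have hr0 : 0 < r := hε.trans_le hεr
  have hcurv : smoothAbsDeriv2 ε z ≤ K / 8 := by
    refine (smoothAbsDeriv2_le hε.ne' (abs_pos.1 (hr0.trans_le hr))).trans ?_
    rw [div_le_iff₀ (pow_pos (hr0.trans_le hr) 3)]
    nlinarith [pow_le_pow_left₀ hr0.le hr 3]
  have ha2 : a ^ 2 = |a| ^ 2 := (sq_abs a).symm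
  have hp : peakProfileDeriv c K ε z = y * a := rfl
  have hX : peakProfileDeriv2 c K ε z = -K * y * a ^ 2 + y * smoothAbsDeriv2 ε z := rfl
  rw [hp, hX, abs_mul, abs_of_pos hy]
  refine ⟨by nlinarith, ?_⟩
  have ha4 : 1 / 4 ≤ a ^ 2 := by nlinarith
  nlinarith [mul_le_mul_of_nonneg_left ha4 (mul_pos hK hy).le,
    mul_le_mul_of_nonneg_left hcurv hy.le, mul_le_mul_of_nonneg_left ha1 (mul_pos hK hy).le]

end Profiles

def geodesicDist (i : Fin N) (s : ℝ) (j : Fin N) (t : ℝ) : ℝ := if i = j then |s - t| else s + t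

lemma geodesicDist_comm (i : Fin N) (s : ℝ) (j : Fin N) (t : ℝ) :
    geodesicDist i s j t = geodesicDist j t i s := by
  by_cases h : i = j
  · subst h; simp only [geodesicDist, if_true, abs_sub_comm]
  · simp only [geodesicDist, if_neg h, if_neg (Ne.symm h), add_comm]

/-- `(j, t) ∈ Γ^δ`. -/
def FarFromVertices (D : Data N) (δ : ℝ) (j : Fin N) (t : ℝ) : Prop :=
  ∀ i, δ < (if i = j then D.ℓ j - t else t + D.ℓ i)

def GPosOnSteepJets (D : Data N) (M S K : ℝ) : Prop :=
  ∀ i, ∀ t ∈ Icc 0 (D.ℓ i), ∀ r p X : ℝ, -M ≤ r → S ≤ |p| → X ≤ -(K / 8) * |p| →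
    0 < G D i r p X t

section Hamiltonian

variable {D : Data N} {C M : ℝ} {i : Fin N}

lemma G_pos_of_coercive (hC : 0 < C) (hcoer : Coercive D C i (Icc 0 (D.ℓ i))) {t r p X : ℝ}
    (ht : t ∈ Icc 0 (D.ℓ i)) (hr : -M ≤ r) (hp : C * (D.lam * M + C) < |p|) (hX : X ≤ 0) :
    0 < G D i r p X t := by
  have h₁ : D.lam * M + C < C⁻¹ * |p| := by rwa [lt_inv_mul_iff₀ hC]
  have h₂ : 0 ≤ -(D.a i t * X) := by nlinarith [D.a_nonneg i t ht]
  have h₃ : D.lam * (-M) ≤ D.lam * r := mul_le_mul_of_nonneg_left hr D.lam_pos.le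
  have h₄ := hcoer t ht p
  unfold G; linarith

lemma G_pos_of_elliptic (hHam : Ham D C i) {H₀ al κ : ℝ}
    (hH₀ : ∀ t ∈ Icc 0 (D.ℓ i), |D.H i t 0| ≤ H₀) (hal : ∀ t ∈ Icc 0 (D.ℓ i), al ≤ D.a i t)
    (hκ : 0 ≤ κ) (halκ : C + 1 ≤ al * κ) {t r p X : ℝ} (ht : t ∈ Icc 0 (D.ℓ i)) (hr : -M ≤ r)
    (hp : D.lam * M + H₀ < |p|) (hX : X ≤ -κ * |p|) :
    0 < G D i r p X t := by
  have h₁ : D.H i t 0 - C * |p| ≤ D.H i t p := by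
    have := (hHam.2 t ht p 0).trans_eq (by rw [sub_zero])
    linarith [neg_abs_le (D.H i t p - D.H i t 0)]
  have h₂ : al * (κ * |p|) ≤ -(D.a i t * X) := by
    have : κ * |p| ≤ -X := by linarith
    nlinarith [hal t ht, D.a_nonneg i t ht, mul_nonneg hκ (abs_nonneg p)]
  have h₃ : D.lam * (-M) ≤ D.lam * r := mul_le_mul_of_nonneg_left hr D.lam_pos.le
  have h₄ := neg_abs_le (D.H i t 0)
  have h₅ : (C + 1) * |p| ≤ al * κ * |p| := mul_le_mul_of_nonneg_right halκ (abs_nonneg p)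
  unfold G; nlinarith [hH₀ t ht]

lemma gPosOnSteepJets {K S H₀ : ℝ} (hC : 0 < C) (hHam : ∀ i, Ham D C i) (hK : 0 ≤ K)
    (hH₀ : ∀ i, ∀ t ∈ Icc 0 (D.ℓ i), |D.H i t 0| ≤ H₀)
    (hrate : ∀ i, Coercive D C i (Icc 0 (D.ℓ i)) ∨
      ∃ al, (∀ t ∈ Icc 0 (D.ℓ i), al ≤ D.a i t) ∧ C + 1 ≤ al * (K / 8))
    (hS₁ : C * (D.lam * M + C) < S) (hS₂ : D.lam * M + H₀ < S) :
    GPosOnSteepJets D M S K := by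
  intro i t ht r p X hr hp hX
  rcases hrate i with hcoer | ⟨al, hal, halK⟩
  · exact G_pos_of_coercive hC hcoer ht hr (hS₁.trans_le hp)
      (hX.trans (by nlinarith [abs_nonneg p]))
  · exact G_pos_of_elliptic (hHam i) (hH₀ i) hal (by positivity) halK ht hr (hS₂.trans_le hp) hX

end Hamiltonian

noncomputable section Barrier

def barrier (c₁ c₂ K ε : ℝ) (b : Fin N) (tb : ℝ) (i : Fin N) (s : ℝ) : ℝ :=
  if i = b then peakProfile c₁ K ε (s - tb) else peakProfile c₁ K ε tb + expProfile c₂ K s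

variable {c₁ c₂ K ε : ℝ} {b : Fin N} {tb : ℝ}

lemma barrier_self : barrier c₁ c₂ K ε b tb b = fun s => peakProfile c₁ K ε (s - tb) := by
  funext s; simp [barrier]

lemma barrier_of_ne {i : Fin N} (hi : i ≠ b) :
    barrier c₁ c₂ K ε b tb i = fun s => peakProfile c₁ K ε tb + expProfile c₂ K s := by
  funext s; simp [barrier, hi]

lemma barrier_apply_zero (i : Fin N) : barrier c₁ c₂ K ε b tb i 0 = peakProfile c₁ K ε tb := by
  by_cases hi : i = b
  · subst hi; simp [barrier, peakProfile, smoothAbs_neg]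
  · simp [barrier, hi, expProfile_zero]

lemma isTest_barrier (hε : ε ≠ 0) (A : ℝ) :
    IsTest (fun i s => A + barrier c₁ c₂ K ε b tb i s) := by
  refine ⟨fun i j => by simp only [barrier_apply_zero], fun i => ?_⟩
  by_cases hi : i = b
  · subst hi
    simp only [barrier_self]
    exact contDiff_const.add ((contDiff_peakProfile c₁ K hε).comp (contDiff_id.sub contDiff_const))
  · simp only [barrier_of_ne hi]
    exact contDiff_const.add (contDiff_const.add (contDiff_expProfile c₂ K))

lemma deriv_barrier_self (hε : ε ≠ 0) (A : ℝ) :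
    deriv (fun s => A + barrier c₁ c₂ K ε b tb b s) =
      fun s => peakProfileDeriv c₁ K ε (s - tb) := by
  funext s
  simp only [barrier_self]
  exact (((hasDerivAt_peakProfile c₁ K hε (s - tb)).comp_sub_const s tb).const_add A).deriv

lemma deriv_deriv_barrier_self (hε : ε ≠ 0) (A s : ℝ) :
    deriv (deriv (fun s => A + barrier c₁ c₂ K ε b tb b s)) s =
      peakProfileDeriv2 c₁ K ε (s - tb) := by
  rw [deriv_barrier_self hε]
  exact ((hasDerivAt_peakProfileDeriv c₁ K hε (s - tb)).comp_sub_const s tb).deriv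

lemma deriv_barrier_of_ne {i : Fin N} (hi : i ≠ b) (A : ℝ) :
    deriv (fun s => A + barrier c₁ c₂ K ε b tb i s) = expProfileDeriv c₂ K := by
  funext s
  simp only [barrier_of_ne hi]
  exact ((hasDerivAt_expProfile c₂ K s).const_add _).const_add A |>.deriv

lemma deriv_deriv_barrier_of_ne {i : Fin N} (hi : i ≠ b) (A s : ℝ) :
    deriv (deriv (fun s => A + barrier c₁ c₂ K ε b tb i s)) s = -K * expProfileDeriv c₂ K s := by
  rw [deriv_barrier_of_ne hi]
  exact (hasDerivAt_expProfileDeriv c₂ K s).deriv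

lemma barrier_le_barrier_zero (hc₁ : 0 ≤ c₁) (hK : 0 ≤ K) (hε : 0 ≤ ε)
    (i : Fin N) (s : ℝ) : barrier c₁ c₂ K ε b tb i s ≤ barrier c₁ c₂ K 0 b tb i s := by
  have hmono := expProfile_mono hc₁ hK
  unfold barrier peakProfile
  split_ifs
  · exact hmono ((smoothAbs_le_abs hε _).trans_eq (smoothAbs_zero_left _).symm)
  · exact add_le_add_left (hmono ((smoothAbs_le_abs hε _).trans_eq (smoothAbs_zero_left _).symm)) _

lemma barrier_self_nonneg (hc₁ : 0 ≤ c₁) (hK : 0 ≤ K) (hε : 0 ≤ ε) (s : ℝ) :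
    0 ≤ barrier c₁ c₂ K ε b tb b s := by
  simp only [barrier_self]
  exact expProfile_nonneg hc₁ hK (smoothAbs_nonneg hε _)

lemma barrier_zero_le_mul_geodesicDist (hc₁ : 0 ≤ c₁) (hc₂ : 0 ≤ c₂) (hK : 0 ≤ K)
    (htb : 0 ≤ tb) {i : Fin N} {s : ℝ} (hs : 0 ≤ s) :
    barrier c₁ c₂ K 0 b tb i s ≤ max c₁ c₂ * K * geodesicDist i s b tb := by
  have h₁ : c₁ * K ≤ max c₁ c₂ * K := mul_le_mul_of_nonneg_right (le_max_left _ _) hK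
  have h₂ : c₂ * K ≤ max c₁ c₂ * K := mul_le_mul_of_nonneg_right (le_max_right _ _) hK
  unfold barrier peakProfile geodesicDist
  simp only [smoothAbs_zero_left]
  split_ifs
  · exact expProfile_le_mul hc₁ |>.trans (mul_le_mul_of_nonneg_right h₁ (abs_nonneg _))
  · rw [abs_of_nonneg htb]
    nlinarith [expProfile_le_mul (K := K) (z := tb) hc₁, expProfile_le_mul (K := K) (z := s) hc₂]

end Barrier

section BarrierSupersolution

variable {D : Data N} {c₁ c₂ K ε R r : ℝ} {b : Fin N} {tb : ℝ}

lemma G_pos_barrier {M S : ℝ} (hG : GPosOnSteepJets D M S K) (hK : 0 < K) (hc₁ : 0 < c₁)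
    (hc₂ : 0 < c₂) (hc₁S : 2 * S ≤ c₁ * K * Real.exp (-(K * R)))
    (hc₂S : S ≤ c₂ * K * Real.exp (-(K * R))) (hε : 0 < ε) (hεr : ε ≤ r)
    (hεK : ε ^ 2 ≤ K / 8 * r ^ 3) (hR : ∀ i, D.ℓ i ≤ R) (htb : tb ∈ Icc 0 (D.ℓ b)) (A : ℝ)
    {i : Fin N} {s ρ : ℝ} (hs : s ∈ Icc 0 (D.ℓ i)) (hfar : i = b → r ≤ |s - tb|) (hρ : -M ≤ ρ) :
    0 < G D i ρ (deriv (fun s => A + barrier c₁ c₂ K ε b tb i s) s)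
      (deriv (deriv (fun s => A + barrier c₁ c₂ K ε b tb i s)) s) s := by
  by_cases hi : i = b
  · subst hi
    rw [deriv_deriv_barrier_self hε.ne', deriv_barrier_self hε.ne']
    have hzR : |s - tb| ≤ R := (abs_sub_le_of_nonneg_of_le hs.1 hs.2 htb.1 htb.2).trans (hR i)
    obtain ⟨hp, hX⟩ := steep_peakProfile hc₁ hK hε hεr hεK (hfar rfl) hzR
    exact hG i s hs ρ _ _ hρ (by linarith) hX
  · rw [deriv_deriv_barrier_of_ne hi, deriv_barrier_of_ne hi]
    obtain ⟨hp, hX⟩ := steep_expProfile hc₂ hK (hs.2.trans (hR i))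
    exact hG i s hs ρ _ _ hρ (hc₂S.trans hp) hX

lemma F_pos_barrier {M B : ℝ}
    (hF : ∀ ρ, -M ≤ ρ → ∀ z ≤ -B, 0 < D.F ρ (Function.update (fun _ => c₂ * K) b z))
    (hK : 0 < K) (hc₁ : 0 < c₁) (hc₁B : 2 * B ≤ c₁ * K * Real.exp (-(K * R)))
    (hε : 0 < ε) (hεr : ε ≤ r) (hεK : ε ^ 2 ≤ K / 8 * r ^ 3) (hr : r ≤ tb) (htbR : tb ≤ R)
    (A : ℝ) {ρ : ℝ} (hρ : -M ≤ ρ) :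
    0 < D.F ρ (fun j => deriv (fun s => A + barrier c₁ c₂ K ε b tb j s) 0) := by
  have hslopes : (fun j => deriv (fun s => A + barrier c₁ c₂ K ε b tb j s) 0) =
      Function.update (fun _ => c₂ * K) b (peakProfileDeriv c₁ K ε (0 - tb)) := by
    funext j
    by_cases hj : j = b
    · subst hj; rw [deriv_barrier_self hε.ne', Function.update_self]
    · rw [deriv_barrier_of_ne hj, Function.update_of_ne hj, expProfileDeriv_zero]
  have htb : |0 - tb| = tb := by rw [zero_sub, abs_neg, abs_of_nonneg (by linarith)]
  obtain ⟨hp, -⟩ := steep_peakProfile hc₁ hK hε hεr hεK (htb ▸ hr) (htb ▸ htbR)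
  have hneg : peakProfileDeriv c₁ K ε (0 - tb) < 0 :=
    mul_neg_of_pos_of_neg (expProfileDeriv_pos hc₁ hK _) (smoothAbsDeriv_neg hε.ne' (by linarith))
  rw [hslopes]
  exact hF ρ hρ _ (by rw [abs_of_neg hneg] at hp; linarith)

lemma dirichlet_le_barrier_vertex {M δ A : ℝ} (hK : 0 ≤ K) (hc₁ : 0 ≤ c₁) (hc₂ : 0 ≤ c₂)
    (hh₁ : ∀ i, D.h i + M ≤ expProfile c₁ K (δ / 4))
    (hh₂ : ∀ i, D.h i + M ≤ expProfile c₂ K (δ / 4))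
    (hε : 0 ≤ ε) (hεδ : ε ≤ δ / 4) (htb : 0 ≤ tb) (hfar : FarFromVertices D δ b tb)
    (hA : -M ≤ A) (i : Fin N) :
    D.h i ≤ A + barrier c₁ c₂ K ε b tb i (D.ℓ i) := by
  have hmono₁ := expProfile_mono hc₁ hK
  have hmono₂ := expProfile_mono hc₂ hK
  by_cases hi : i = b
  · subst hi
    have hδ : δ < D.ℓ i - tb := by simpa using hfar i
    have : δ / 4 ≤ smoothAbs ε (D.ℓ i - tb) := by
      have := abs_sub_le_smoothAbs ε (D.ℓ i - tb)
      rw [abs_of_pos (by linarith)] at this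
      linarith
    simp only [barrier_self, peakProfile]
    linarith [hh₁ i, hmono₁ this]
  · have hδ : δ < tb + D.ℓ i := by simpa [hi] using hfar i
    simp only [barrier_of_ne hi, peakProfile]
    have h₁ := expProfile_nonneg hc₁ hK (smoothAbs_nonneg hε tb)
    have h₂ := expProfile_nonneg hc₂ hK (D.ℓ_pos i).le
    rcases le_or_gt (δ / 2) tb with htb' | htb'
    · have : δ / 4 ≤ smoothAbs ε tb := by
        have := abs_sub_le_smoothAbs ε tb
        rw [abs_of_nonneg htb] at this
        linarith
      linarith [hh₁ i, hmono₁ this]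
    · linarith [hh₂ i, hmono₂ (show δ / 4 ≤ D.ℓ i by linarith)]

end BarrierSupersolution

def IsMaxPoint (D : Data N) (w : Fin N → ℝ → ℝ) (i : Fin N) (s : ℝ) : Prop :=
  s ∈ Icc 0 (D.ℓ i) ∧ ∀ j, ∀ s' ∈ Icc 0 (D.ℓ j), w j s' ≤ w i s

lemma exists_isMaxPoint [Nonempty (Fin N)] (D : Data N) {w : Fin N → ℝ → ℝ}
    (hw : ∀ i, UpperSemicontinuousOn (w i) (Icc 0 (D.ℓ i))) : ∃ i s, IsMaxPoint D w i s := by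
  choose x hx hmax using fun i =>
    (hw i).exists_isMaxOn (nonempty_Icc.2 (D.ℓ_pos i).le) isCompact_Icc
  obtain ⟨i, hi⟩ := Finite.exists_max fun i => w i (x i)
  exact ⟨i, x i, hx i, fun j s hs => (hmax j hs).trans (hi j)⟩

lemma exists_pos_forall_lt_of_upperSemicontinuousOn {f : ℝ → ℝ} {S : Set ℝ} {x y : ℝ}
    (hf : UpperSemicontinuousOn f S) (hx : x ∈ S) (hy : f x < y) :
    ∃ r > 0, ∀ z ∈ S, |z - x| < r → f z < y := by
  obtain ⟨r, hr, hball⟩ := Metric.mem_nhdsWithin_iff.1 (hf x hx y hy)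
  exact ⟨r, hr, fun z hz hzx => hball ⟨by rwa [Metric.mem_ball, Real.dist_eq], hz⟩⟩

namespace IsSubsol

variable {D : Data N} {u φ : Fin N → ℝ → ℝ}

lemma upperSemicontinuousOn_sub (hu : IsSubsol D u) (hφ : IsTest φ) (i : Fin N) :
    UpperSemicontinuousOn (fun s => u i s - φ i s) (Icc 0 (D.ℓ i)) := by
  have h := (hu.1 i).add (hφ.2 i).continuous.neg.continuousOn.upperSemicontinuousOn
  simp only [Pi.neg_apply, ← sub_eq_add_neg] at h
  exact h

lemma G_nonpos_of_isMaxPoint (hu : IsSubsol D u) (hφ : IsTest φ) {i : Fin N} {s : ℝ}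
    (hmax : IsMaxPoint D (fun j s => u j s - φ j s) i s) (hs : s ∈ Ioo 0 (D.ℓ i)) :
    G D i (u i s) (deriv (φ i) s) (deriv (deriv (φ i)) s) s ≤ 0 :=
  (hu.2.2 φ hφ).1 i s hs ⟨1, one_pos, fun s' hs' _ => hmax.2 i s' hs'⟩

lemma junction_of_isMaxPoint (hu : IsSubsol D u) (hφ : IsTest φ) {i : Fin N}
    (hmax : IsMaxPoint D (fun j s => u j s - φ j s) i 0) :
    (∃ k, G D k (u k 0) (deriv (φ k) 0) (deriv (deriv (φ k)) 0) 0 ≤ 0) ∨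
      ∀ k, D.F (u k 0) (fun j => deriv (φ j) 0) ≤ 0 :=
  (hu.2.2 φ hφ).2.1 ⟨1, one_pos, fun j s hs _ =>
    (hmax.2 j s hs).trans_eq (show u i 0 - φ i 0 = u j 0 - φ j 0 by rw [hu.2.1 i j, hφ.1 i j])⟩

lemma vertex_of_isMaxPoint (hu : IsSubsol D u) (hφ : IsTest φ) {i : Fin N}
    (hmax : IsMaxPoint D (fun j s => u j s - φ j s) i (D.ℓ i)) :
    G D i (u i (D.ℓ i)) (deriv (φ i) (D.ℓ i)) (deriv (deriv (φ i)) (D.ℓ i)) (D.ℓ i) ≤ 0 ∨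
      u i (D.ℓ i) ≤ D.h i :=
  (hu.2.2 φ hφ).2.2 i ⟨1, one_pos, fun s hs _ => hmax.2 i s hs⟩

/-- If the test function is a strict supersolution everywhere except on the `r`-neighbourhood of
`tb` in edge `b`, a positive maximum of `u - φ` is also attained in that neighbourhood. -/
lemma exists_near_of_isMaxPoint (hu : IsSubsol D u) (hφ : IsTest φ) {b : Fin N} {tb r : ℝ}
    (htb : 0 ≤ tb)
    (hG : ∀ i, ∀ s ∈ Icc 0 (D.ℓ i), (i = b → r ≤ |s - tb|) →
      0 < G D i (u i s) (deriv (φ i) s) (deriv (deriv (φ i)) s) s)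
    (hF : r ≤ tb → 0 < D.F (u b 0) (fun j => deriv (φ j) 0))
    (hh : ∀ i, D.h i ≤ φ i (D.ℓ i)) {iS : Fin N} {sS : ℝ}
    (hmax : IsMaxPoint D (fun j s => u j s - φ j s) iS sS) (hpos : 0 < u iS sS - φ iS sS) :
    ∃ s ∈ Icc 0 (D.ℓ b), |s - tb| < r ∧ u b s - φ b s = u iS sS - φ iS sS := by
  have hb0 : (0 : ℝ) ∈ Icc 0 (D.ℓ b) := ⟨le_rfl, (D.ℓ_pos b).le⟩
  have h0tb : |0 - tb| = tb := by rw [zero_sub, abs_neg, abs_of_nonneg htb]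
  rcases hmax.1.1.eq_or_lt with rfl | hsS
  · by_cases hnear : tb < r
    · exact ⟨0, hb0, by rwa [h0tb], by rw [hu.2.1 b iS, hφ.1 b iS]⟩
    rcases hu.junction_of_isMaxPoint hφ hmax with ⟨k, hk⟩ | hk
    · exact absurd hk (hG k 0 ⟨le_rfl, (D.ℓ_pos k).le⟩ fun _ => h0tb.symm ▸ not_lt.1 hnear).not_ge
    · exact absurd (hk b) (hF (not_lt.1 hnear)).not_ge
  by_cases hnear : iS = b ∧ |sS - tb| < r
  · obtain ⟨rfl, hnear⟩ := hnear
    exact ⟨sS, hmax.1, hnear, rfl⟩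
  have hGS := hG iS sS hmax.1 fun hb => not_lt.1 fun h => hnear ⟨hb, h⟩
  rcases hmax.1.2.eq_or_lt with hℓ | hℓ
  · rw [hℓ] at hmax hpos hGS
    rcases hu.vertex_of_isMaxPoint hφ hmax with h | h
    · exact absurd h hGS.not_ge
    · linarith [hh iS]
  · exact absurd (hu.G_nonpos_of_isMaxPoint hφ hmax ⟨hsS, hℓ⟩) hGS.not_ge

end IsSubsol

structure BarrierConstants (D : Data N) (M δ : ℝ) where
  K : ℝ
  c₁ : ℝ
  c₂ : ℝ
  S : ℝ
  B : ℝ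
  R : ℝ
  K_pos : 0 < K
  c₁_pos : 0 < c₁
  c₂_pos : 0 < c₂
  length_le : ∀ i, D.ℓ i ≤ R
  gPos : GPosOnSteepJets D M S K
  kirchhoff : ∀ i, ∀ ρ, -M ≤ ρ → ∀ z ≤ -B, 0 < D.F ρ (Function.update (fun _ => c₂ * K) i z)
  -- away from its peak the smoothed cone has at least half the slope of its profile
  slope₁ : 2 * max S B ≤ c₁ * K * Real.exp (-(K * R))
  slope₂ : S ≤ c₂ * K * Real.exp (-(K * R))
  dirichlet₁ : ∀ i, D.h i + M ≤ expProfile c₁ K (δ / 4)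
  dirichlet₂ : ∀ i, D.h i + M ≤ expProfile c₂ K (δ / 4)

lemma Data.exists_abs_H_zero_le (D : Data N) :
    ∃ H₀, ∀ i, ∀ t ∈ Icc 0 (D.ℓ i), |D.H i t 0| ≤ H₀ := by
  refine (eventually_all (l := (atTop : Filter ℝ)).2 fun i => ?_).exists
  obtain ⟨B, hB⟩ := isCompact_Icc.exists_bound_of_continuousOn
    ((D.H_cont i).comp (continuousOn_id.prodMk continuousOn_const) fun t ht => ⟨ht, mem_univ _⟩)
  exact (eventually_ge_atTop B).mono fun H₀ hH₀ t ht => (hB t ht).trans hH₀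

lemma exists_rate {D : Data N} {C : ℝ}
    (hextra : ∀ i, Coercive D C i (Icc 0 (D.ℓ i)) ∨ ∃ al > 0, ∀ t ∈ Icc 0 (D.ℓ i), al ≤ D.a i t) :
    ∃ K > 0, ∀ i, Coercive D C i (Icc 0 (D.ℓ i)) ∨
      ∃ al, (∀ t ∈ Icc 0 (D.ℓ i), al ≤ D.a i t) ∧ C + 1 ≤ al * (K / 8) := by
  refine ((eventually_gt_atTop 0).and (eventually_all.2 fun i => ?_)).exists
  rcases hextra i with hcoer | ⟨al, hal, hal_le⟩
  · exact Eventually.of_forall fun _ => Or.inl hcoer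
  · exact (((tendsto_id.atTop_div_const (by norm_num : (0 : ℝ) < 8)).const_mul_atTop hal
      ).eventually_ge_atTop (C + 1)).mono fun K hK => Or.inr ⟨al, hal_le, hK⟩

lemma Kirchhoff.exists_bound {D : Data N} (hKir : Kirchhoff D) (M : ℝ) (p : Fin N → ℝ) :
    ∃ B, ∀ i, ∀ ρ, -M ≤ ρ → ∀ z ≤ -B, 0 < D.F ρ (Function.update p i z) := by
  have : ∀ i, ∀ᶠ B in atTop, ∀ z ≤ -B, 0 < D.F (-M) (Function.update p i z) := fun i => by
    obtain ⟨b, hb⟩ := eventually_atBot.1 ((hKir.2.2 i (-M) p).eventually_gt_atTop 0)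
    exact (eventually_ge_atTop (-b)).mono fun B hB z hz => hb z (by linarith)
  obtain ⟨B, hB⟩ := (eventually_all.2 this).exists
  exact ⟨B, fun i ρ hρ z hz => (hB i z hz).trans_le (hKir.1 ρ (-M) _ _ hρ fun _ => le_rfl)⟩

lemma eventually_barrierCoeff (D : Data N) {K δ : ℝ} (hK : 0 < K) (hδ : 0 < δ) (M S R : ℝ) :
    ∀ᶠ c in atTop, 0 < c ∧ S ≤ c * K * Real.exp (-(K * R)) ∧
      ∀ i, D.h i + M ≤ expProfile c K (δ / 4) := by
  have hmul : ∀ {a : ℝ}, 0 < a → ∀ y : ℝ, ∀ᶠ c in atTop, y ≤ c * a := fun ha y =>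
    (tendsto_id.atTop_mul_const ha).eventually_ge_atTop y
  have hexp : 0 < 1 - Real.exp (-(K * (δ / 4))) :=
    sub_pos.2 (Real.exp_lt_one_iff.2 (by nlinarith))
  have hslope := hmul (a := K * Real.exp (-(K * R))) (by positivity) S
  simp only [← mul_assoc] at hslope
  exact (eventually_gt_atTop 0).and (hslope.and (eventually_all.2 fun i => hmul hexp (D.h i + M)))

lemma exists_barrierConstants {D : Data N} {C : ℝ} (hC : 0 < C) (hHam : ∀ i, Ham D C i)
    (hKir : Kirchhoff D)
    (hextra : ∀ i, Coercive D C i (Icc 0 (D.ℓ i)) ∨ ∃ al > 0, ∀ t ∈ Icc 0 (D.ℓ i), al ≤ D.a i t)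
    {δ : ℝ} (hδ : 0 < δ) (M : ℝ) : Nonempty (BarrierConstants D M δ) := by
  obtain ⟨R, hR⟩ := (eventually_all.2 fun i => eventually_ge_atTop (D.ℓ i)).exists
  obtain ⟨H₀, hH₀⟩ := D.exists_abs_H_zero_le
  obtain ⟨K, hK, hrate⟩ := exists_rate hextra
  obtain ⟨S, hS₁, hS₂⟩ := ((eventually_gt_atTop (C * (D.lam * M + C))).and
    (eventually_gt_atTop (D.lam * M + H₀))).exists
  obtain ⟨c₂, hc₂, hc₂S, hc₂h⟩ := (eventually_barrierCoeff D hK hδ M S R).exists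
  obtain ⟨B, hB⟩ := hKir.exists_bound M (fun _ => c₂ * K)
  obtain ⟨c₁, hc₁, hc₁S, hc₁h⟩ := (eventually_barrierCoeff D hK hδ M (2 * max S B) R).exists
  exact ⟨⟨K, c₁, c₂, S, B, R, hK, hc₁, hc₂, hR,
    gPosOnSteepJets hC hHam hK.le hH₀ hrate hS₁ hS₂, hB, hc₁S, hc₂S, hc₁h, hc₂h⟩⟩

lemma BarrierConstants.exists_near_peak {D : Data N} {M δ : ℝ} (κ : BarrierConstants D M δ)
    {u : Fin N → ℝ → ℝ} (hu : IsSubsol D u) (hM : ∀ i, ∀ s ∈ Icc 0 (D.ℓ i), -M ≤ u i s)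
    {b : Fin N} {tb : ℝ} (htb : tb ∈ Icc 0 (D.ℓ b)) (hfar : FarFromVertices D δ b tb)
    {r ε : ℝ} (hε : 0 < ε) (hεr : ε ≤ r) (hrδ : r ≤ δ / 4) (hεK : ε ^ 2 ≤ κ.K / 8 * r ^ 3)
    {iS : Fin N} {sS : ℝ}
    (hmax : IsMaxPoint D (fun j s => u j s - (u b tb + barrier κ.c₁ κ.c₂ κ.K ε b tb j s)) iS sS)
    (hpos : 0 < u iS sS - (u b tb + barrier κ.c₁ κ.c₂ κ.K ε b tb iS sS)) :
    ∃ s ∈ Icc 0 (D.ℓ b), |s - tb| < r ∧ u b s - (u b tb + barrier κ.c₁ κ.c₂ κ.K ε b tb b s) =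
      u iS sS - (u b tb + barrier κ.c₁ κ.c₂ κ.K ε b tb iS sS) := by
  have hS : 2 * κ.S ≤ κ.c₁ * κ.K * Real.exp (-(κ.K * κ.R)) :=
    (mul_le_mul_of_nonneg_left (le_max_left _ _) two_pos.le).trans κ.slope₁
  have hB : 2 * κ.B ≤ κ.c₁ * κ.K * Real.exp (-(κ.K * κ.R)) :=
    (mul_le_mul_of_nonneg_left (le_max_right _ _) two_pos.le).trans κ.slope₁
  refine hu.exists_near_of_isMaxPoint (isTest_barrier hε.ne' _) htb.1
    (fun j t ht hfar' => G_pos_barrier κ.gPos κ.K_pos κ.c₁_pos κ.c₂_pos hS κ.slope₂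
      hε hεr hεK κ.length_le htb _ ht hfar' (hM j t ht))
    (fun hrtb => F_pos_barrier (κ.kirchhoff b) κ.K_pos κ.c₁_pos hB hε hεr hεK hrtb
      (htb.2.trans (κ.length_le b)) _ (hM b 0 ⟨le_rfl, (D.ℓ_pos b).le⟩))
    (dirichlet_le_barrier_vertex κ.K_pos.le κ.c₁_pos.le κ.c₂_pos.le κ.dirichlet₁ κ.dirichlet₂ hε.le
      (hεr.trans hrδ) htb.1 hfar (hM b tb htb)) hmax hpos

theorem BarrierConstants.sub_le_barrier {D : Data N} {M δ : ℝ} (κ : BarrierConstants D M δ)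
    (hδ : 0 < δ) {u : Fin N → ℝ → ℝ} (hu : IsSubsol D u)
    (hM : ∀ i, ∀ s ∈ Icc 0 (D.ℓ i), -M ≤ u i s) {b : Fin N} {tb : ℝ}
    (htb : tb ∈ Icc 0 (D.ℓ b)) (hfar : FarFromVertices D δ b tb) {i : Fin N} {s : ℝ}
    (hs : s ∈ Icc 0 (D.ℓ i)) :
    u i s - u b tb ≤ barrier κ.c₁ κ.c₂ κ.K 0 b tb i s := by
  by_contra! hviol
  obtain ⟨r₁, hr₁, htrap⟩ := exists_pos_forall_lt_of_upperSemicontinuousOn (hu.1 b) htb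
    (lt_add_of_pos_right _ (sub_pos.2 hviol))
  set r := min r₁ (δ / 4)
  have hr : 0 < r := lt_min hr₁ (by positivity)
  -- the smoothing keeps the curvature of the cone below `K / 8` outside the `r`-neighbourhood
  set ε := min r (κ.K * r ^ 2 / 8)
  have hε : 0 < ε := lt_min hr (by have := κ.K_pos; positivity)
  have hεK : ε ^ 2 ≤ κ.K / 8 * r ^ 3 :=
    calc ε ^ 2 = ε * ε := sq ε
      _ ≤ r * (κ.K * r ^ 2 / 8) := mul_le_mul (min_le_left _ _) (min_le_right _ _) hε.le hr.le
      _ = κ.K / 8 * r ^ 3 := by ring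
  have : Nonempty (Fin N) := ⟨b⟩
  obtain ⟨iS, sS, hmax⟩ :=
    exists_isMaxPoint D (hu.upperSemicontinuousOn_sub (isTest_barrier hε.ne' (u b tb)))
  have hsmooth : barrier κ.c₁ κ.c₂ κ.K ε b tb i s ≤ barrier κ.c₁ κ.c₂ κ.K 0 b tb i s :=
    barrier_le_barrier_zero κ.c₁_pos.le κ.K_pos.le hε.le i s
  obtain ⟨s', hs', hnear, heq⟩ := κ.exists_near_peak hu hM htb hfar hε (min_le_left _ _)
    (min_le_right _ _) hεK hmax (by linarith [hmax.2 i s hs])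
  have hpeak : 0 ≤ barrier κ.c₁ κ.c₂ κ.K ε b tb b s' :=
    barrier_self_nonneg κ.c₁_pos.le κ.K_pos.le hε.le s'
  linarith [htrap s' hs' (hnear.trans_le (min_le_left _ _)), hmax.2 i s hs]

/-- Proposition 5.2, Lipschitz regularity of subsolutions.
Under the steady assumptions, if on each edge either `H i` is coercive or
`a i` is uniformly elliptic, every bounded viscosity subsolution of (P) is
Lipschitz (for the geodesic distance) on `Γ^δ`, with a constant depending only
on `δ`, the sup-norm bound and the data. -/
theorem lipschitz_subsolutions (N : ℕ) (D : Data N) (C : ℝ)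
    (hSteady : Steady D C)
    (hextra : ∀ i, Coercive D C i (Set.Icc 0 (D.ℓ i)) ∨
      ∃ al > 0, ∀ t ∈ Set.Icc (0:ℝ) (D.ℓ i), al ≤ D.a i t) :
    ∀ δ > 0, ∀ M : ℝ, 0 ≤ M → ∃ L > 0,
      ∀ u : Fin N → ℝ → ℝ, IsSubsol D u →
        (∀ i, ∀ t ∈ Set.Icc (0:ℝ) (D.ℓ i), |u i t| ≤ M) →
        ∀ j, ∀ t ∈ Set.Icc (0:ℝ) (D.ℓ j),
          (∀ i, δ < (if i = j then D.ℓ j - t else t + D.ℓ i)) →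
        ∀ j', ∀ t' ∈ Set.Icc (0:ℝ) (D.ℓ j'),
          (∀ i, δ < (if i = j' then D.ℓ j' - t' else t' + D.ℓ i)) →
        |u j t - u j' t'| ≤ L * (if j = j' then |t - t'| else t + t') := by
  intro δ hδ M _
  obtain ⟨hC, hHam, -, -, hKir⟩ := hSteady
  obtain ⟨κ⟩ := exists_barrierConstants hC hHam hKir hextra hδ M
  refine ⟨max κ.c₁ κ.c₂ * κ.K, mul_pos (lt_max_of_lt_left κ.c₁_pos) κ.K_pos, ?_⟩
  intro u hu hbound j t ht hjt j' t' ht' hjt'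
  have hM : ∀ i, ∀ s ∈ Icc 0 (D.ℓ i), -M ≤ u i s := fun i s hs => neg_le_of_abs_le (hbound i s hs)
  have key : ∀ b tb, tb ∈ Icc 0 (D.ℓ b) → FarFromVertices D δ b tb → ∀ i, ∀ s ∈ Icc 0 (D.ℓ i),
      u i s - u b tb ≤ max κ.c₁ κ.c₂ * κ.K * geodesicDist i s b tb :=
    fun b tb htb hfar i s hs => (κ.sub_le_barrier hδ hu hM htb hfar hs).trans
      (barrier_zero_le_mul_geodesicDist κ.c₁_pos.le κ.c₂_pos.le κ.K_pos.le htb.1 hs.1)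
  rw [abs_sub_le_iff]
  exact ⟨key j' t' ht' hjt' j t ht,
    (key j t ht hjt j' t' ht').trans_eq (congrArg _ (geodesicDist_comm j' t' j t))⟩

end Paper
end

section
/- Reduction of the junction condition to the degenerate edges: assume only that each H_i is continuous and each a_i is continuous and nonnegative, and let 𝒟 = {i : a_i(O) = 0}. (1) If u ∈ USC(Γ) is a viscosity subsolution of problem (P) and φ ∈ C²(Γ) is such that O is a local maximum point of u − φ, then min{ min_{i∈𝒟} [ λ u(O) + H_i(O, φ_{x_i}(O)) ], F(u(O), φ_{x_1}(O),…,φ_{x_N}(O)) } ≤ 0. (2) If v ∈ LSC(Γ) is a viscosity supersolution of problem (P) and φ ∈ C²(Γ) is such that O is a local minimum point of v − φ, then max{ max_{i∈𝒟} [ λ v(O) + H_i(O, φ_{x_i}(O)) ], F(v(O), φ_{x_1}(O),…,φ_{x_N}(O)) } ≥ 0. -/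
open Set Filter Topology

namespace Paper

variable {N : ℕ}

/-!
At `O`, bend the test function on every edge `j` with `a_j(O) > 0` by `ε s - M s²`. For
`ε > 0` and `M` large this keeps `O` a local maximum of `u - φ` and makes `G_j > 0` there, since
the second derivative enters `G_j` through `-a_j(O) φ''`. So the junction condition holds either
through a degenerate edge, where the bending is absent and `G_i` is the first-order expression,
or through `F` at the slopes shifted by `ε` on the non-degenerate edges; let `ε → 0` using the
continuity of `F`. Supersolutions are symmetric, with `ε < 0` and `M → -∞`.
-/

def bump (ε M s : ℝ) : ℝ := s * (ε - M * s)

lemma hasDerivAt_bump (ε M s : ℝ) : HasDerivAt (bump ε M) (ε - 2 * M * s) s := by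
  have h := (hasDerivAt_id' s).mul (((hasDerivAt_id' s).const_mul M).const_sub ε)
  exact h.congr_deriv (by ring)

lemma contDiff_bump (ε M : ℝ) : ContDiff ℝ 2 (bump ε M) := by
  unfold bump
  fun_prop

lemma bump_nonneg_of_lt_div {ε M s : ℝ} (hs : 0 ≤ s) (hsε : s < ε / (|M| + 1)) :
    0 ≤ bump ε M s := by
  rw [lt_div_iff₀ (by positivity)] at hsε
  exact mul_nonneg hs (by nlinarith [le_abs_self M])

lemma bump_nonpos_of_lt_div {ε M s : ℝ} (hs : 0 ≤ s) (hsε : s < -ε / (|M| + 1)) :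
    bump ε M s ≤ 0 := by
  rw [lt_div_iff₀ (by positivity)] at hsε
  exact mul_nonpos_of_nonneg_of_nonpos hs (by nlinarith [neg_abs_le M])

section Perturb

def perturb (φ : Fin N → ℝ → ℝ) (c : Fin N → ℝ) (ε M : ℝ) : Fin N → ℝ → ℝ :=
  fun j s => φ j s + c j * bump ε M s

variable {φ : Fin N → ℝ → ℝ} {c : Fin N → ℝ} {ε M : ℝ}

@[simp]
lemma perturb_zero (j : Fin N) : perturb φ c ε M j 0 = φ j 0 := by
  simp [perturb, bump]

lemma IsTest.perturb (hφ : IsTest φ) : IsTest (perturb φ c ε M) :=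
  ⟨fun i j => by simpa only [perturb_zero] using hφ.1 i j,
    fun j => (hφ.2 j).add (contDiff_const.mul (contDiff_bump ε M))⟩

lemma deriv_perturb (hφ : IsTest φ) (j : Fin N) :
    deriv (perturb φ c ε M j) = fun s => deriv (φ j) s + c j * (ε - 2 * M * s) :=
  funext fun s => ((((hφ.2 j).differentiable two_ne_zero s).hasDerivAt).add
    ((hasDerivAt_bump ε M s).const_mul (c j))).deriv

lemma deriv_perturb_zero (hφ : IsTest φ) (j : Fin N) :
    deriv (perturb φ c ε M j) 0 = deriv (φ j) 0 + c j * ε := by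
  simp [deriv_perturb hφ]

lemma deriv_deriv_perturb_zero (hφ : IsTest φ) (j : Fin N) :
    deriv (deriv (perturb φ c ε M j)) 0 = deriv (deriv (φ j)) 0 - c j * (2 * M) := by
  rw [deriv_perturb hφ]
  have hlin : HasDerivAt (fun s => c j * (ε - 2 * M * s)) (-(c j * (2 * M))) 0 := by
    simpa using (((hasDerivAt_id (0 : ℝ)).const_mul (2 * M)).const_sub ε).const_mul (c j)
  exact (((hφ.2 j).differentiable_deriv_two 0).hasDerivAt.add hlin).deriv

variable {D : Data N} {u : Fin N → ℝ → ℝ}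

lemma LocalMaxO.perturb (h : LocalMaxO D fun j s => u j s - φ j s) (hc : ∀ j, 0 ≤ c j)
    (hε : 0 < ε) : LocalMaxO D fun j s => u j s - perturb φ c ε M j s := by
  obtain ⟨δ, hδ, hmax⟩ := h
  refine ⟨min δ (ε / (|M| + 1)), lt_min hδ (by positivity), fun j s hs hsδ => ?_⟩
  have h₁ := hmax j s hs (hsδ.trans_le (min_le_left _ _))
  have h₂ := mul_nonneg (hc j) (bump_nonneg_of_lt_div (M := M) hs.1
    (hsδ.trans_le (min_le_right _ _)))
  simp only [perturb_zero]
  unfold Paper.perturb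
  linarith

lemma LocalMinO.perturb (h : LocalMinO D fun j s => u j s - φ j s) (hc : ∀ j, 0 ≤ c j)
    (hε : ε < 0) : LocalMinO D fun j s => u j s - perturb φ c ε M j s := by
  obtain ⟨δ, hδ, hmin⟩ := h
  refine ⟨min δ (-ε / (|M| + 1)), lt_min hδ (div_pos (neg_pos.2 hε) (by positivity)),
    fun j s hs hsδ => ?_⟩
  have h₁ := hmin j s hs (hsδ.trans_le (min_le_left _ _))
  have h₂ := mul_nonpos_of_nonneg_of_nonpos (hc j) (bump_nonpos_of_lt_div (M := M) hs.1
    (hsδ.trans_le (min_le_right _ _)))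
  simp only [perturb_zero]
  unfold Paper.perturb
  linarith

end Perturb

namespace Data

variable (D : Data N)

noncomputable def nondegIndicator (j : Fin N) : ℝ := if D.a j 0 = 0 then 0 else 1

lemma nondegIndicator_nonneg (j : Fin N) : 0 ≤ D.nondegIndicator j := by
  unfold nondegIndicator
  split_ifs <;> norm_num

lemma a_zero_pos {i : Fin N} (hi : D.a i 0 ≠ 0) : 0 < D.a i 0 :=
  (D.a_nonneg i 0 ⟨le_rfl, (D.ℓ_pos i).le⟩).lt_of_ne' hi

lemma continuous_F_shift (r : ℝ) (p c : Fin N → ℝ) :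
    Continuous fun ε : ℝ => D.F r fun j => p j + c j * ε :=
  D.F_cont.comp (continuous_const.prodMk (continuous_pi fun _ => by fun_prop))

lemma G_sub_two_mul (i : Fin N) (r p X t M : ℝ) :
    G D i r p (X - 2 * M) t = 2 * D.a i t * M + G D i r p X t := by
  unfold G
  ring

lemma eventually_atTop_G_pos (r p X : Fin N → ℝ) :
    ∀ᶠ M in atTop, ∀ i, D.a i 0 ≠ 0 → 0 < G D i (r i) (p i) (X i - 2 * M) 0 := by
  refine eventually_all.2 fun i => ?_
  by_cases hi : D.a i 0 = 0
  · exact .of_forall fun _ h => absurd hi h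
  · have hlim : Tendsto (fun M => G D i (r i) (p i) (X i - 2 * M) 0) atTop atTop := by
      simp only [G_sub_two_mul]
      exact tendsto_atTop_add_const_right _ _
        (tendsto_id.const_mul_atTop (by linarith [D.a_zero_pos hi]))
    filter_upwards [hlim.eventually_gt_atTop 0] with M hM _ using hM

lemma eventually_atBot_G_neg (r p X : Fin N → ℝ) :
    ∀ᶠ M in atBot, ∀ i, D.a i 0 ≠ 0 → G D i (r i) (p i) (X i - 2 * M) 0 < 0 := by
  refine eventually_all.2 fun i => ?_
  by_cases hi : D.a i 0 = 0
  · exact .of_forall fun _ h => absurd hi h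
  · have hlim : Tendsto (fun M => G D i (r i) (p i) (X i - 2 * M) 0) atBot atBot := by
      simp only [G_sub_two_mul]
      exact tendsto_atBot_add_const_right _ _
        (tendsto_id.const_mul_atBot (by linarith [D.a_zero_pos hi]))
    filter_upwards [hlim.eventually_lt_atBot 0] with M hM _ using hM

end Data

variable {D : Data N} {u v φ : Fin N → ℝ → ℝ}

theorem IsSubsol.degenerate_or_F_shift_nonpos (hu : IsSubsol D u) (hφ : IsTest φ)
    (hmax : LocalMaxO D fun j s => u j s - φ j s) {ε : ℝ} (hε : 0 < ε) :
    (∃ i, D.a i 0 = 0 ∧ D.lam * u i 0 + D.H i 0 (deriv (φ i) 0) ≤ 0) ∨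
      ∀ i, D.F (u i 0) (fun j => deriv (φ j) 0 + D.nondegIndicator j * ε) ≤ 0 := by
  obtain ⟨M, hM⟩ := (D.eventually_atTop_G_pos (fun i => u i 0) (fun i => deriv (φ i) 0 + ε)
    (fun i => deriv (deriv (φ i)) 0)).exists
  have hjunction := (hu.2.2 _ (hφ.perturb (M := M))).2.1
    (hmax.perturb D.nondegIndicator_nonneg hε)
  simp only [deriv_perturb_zero hφ, deriv_deriv_perturb_zero hφ] at hjunction
  refine hjunction.imp (fun ⟨i, hi⟩ => ?_) id
  by_cases ha : D.a i 0 = 0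
  · exact ⟨i, ha, by simpa [G, Data.nondegIndicator, ha] using hi⟩
  · exact absurd hi (not_le.2 (by simpa [Data.nondegIndicator, ha] using hM i ha))

theorem IsSupersol.degenerate_or_F_shift_nonneg (hv : IsSupersol D v) (hφ : IsTest φ)
    (hmin : LocalMinO D fun j s => v j s - φ j s) {ε : ℝ} (hε : ε < 0) :
    (∃ i, D.a i 0 = 0 ∧ 0 ≤ D.lam * v i 0 + D.H i 0 (deriv (φ i) 0)) ∨
      ∀ i, 0 ≤ D.F (v i 0) (fun j => deriv (φ j) 0 + D.nondegIndicator j * ε) := by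
  obtain ⟨M, hM⟩ := (D.eventually_atBot_G_neg (fun i => v i 0) (fun i => deriv (φ i) 0 + ε)
    (fun i => deriv (deriv (φ i)) 0)).exists
  have hjunction := (hv.2.2 _ (hφ.perturb (M := M))).2.1
    (hmin.perturb D.nondegIndicator_nonneg hε)
  simp only [deriv_perturb_zero hφ, deriv_deriv_perturb_zero hφ] at hjunction
  refine hjunction.imp (fun ⟨i, hi⟩ => ?_) id
  by_cases ha : D.a i 0 = 0
  · exact ⟨i, ha, by simpa [G, Data.nondegIndicator, ha] using hi⟩
  · exact absurd hi (not_le.2 (by simpa [Data.nondegIndicator, ha] using hM i ha))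

/-- Proposition 3.2, reduction of the junction condition to
the degenerate edges.  Assuming only continuity of the data, at a local
maximum (resp. minimum) point `O` of `u − φ` (resp. `v − φ`), the junction
viscosity inequality reduces to a first-order inequality involving only the
edges on which the diffusion vanishes at `O`. -/
theorem junction_condition_reduction (N : ℕ) (D : Data N) :
    (∀ (u φ : Fin N → ℝ → ℝ), IsSubsol D u → IsTest φ →
      LocalMaxO D (fun j s => u j s - φ j s) →
      (∃ i, D.a i 0 = 0 ∧ D.lam * u i 0 + D.H i 0 (deriv (φ i) 0) ≤ 0) ∨
      (∀ i, D.F (u i 0) (fun j => deriv (φ j) 0) ≤ 0)) ∧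
    (∀ (v φ : Fin N → ℝ → ℝ), IsSupersol D v → IsTest φ →
      LocalMinO D (fun j s => v j s - φ j s) →
      (∃ i, D.a i 0 = 0 ∧ 0 ≤ D.lam * v i 0 + D.H i 0 (deriv (φ i) 0)) ∨
      (∀ i, 0 ≤ D.F (v i 0) (fun j => deriv (φ j) 0))) := by
  refine ⟨fun u φ hu hφ hmax => or_iff_not_imp_left.2 fun hdeg i => ?_,
    fun v φ hv hφ hmin => or_iff_not_imp_left.2 fun hdeg i => ?_⟩
  · have hF := (D.continuous_F_shift (u i 0) (fun j => deriv (φ j) 0) D.nondegIndicator).tendsto 0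
    simpa using le_of_tendsto (hF.mono_left nhdsWithin_le_nhds) <|
      eventually_nhdsWithin_of_forall fun ε (hε : ε ∈ Ioi 0) =>
        (hu.degenerate_or_F_shift_nonpos hφ hmax hε).resolve_left hdeg i
  · have hF := (D.continuous_F_shift (v i 0) (fun j => deriv (φ j) 0) D.nondegIndicator).tendsto 0
    simpa using ge_of_tendsto (hF.mono_left nhdsWithin_le_nhds) <|
      eventually_nhdsWithin_of_forall fun ε (hε : ε ∈ Iio 0) =>
        (hv.degenerate_or_F_shift_nonneg hφ hmin hε).resolve_left hdeg i

end Paper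
end

section
/- Junction conditions via first-order sub/superdifferentials: assume only that each H_i is continuous and each a_i is continuous and nonnegative, and let 𝒟 = {i : a_i(O) = 0}. (1) If u ∈ USC(Γ) is a viscosity subsolution of problem (P) and p = (p_1,…,p_N) ∈ D⁺u(O), then min{ min_{i∈𝒟} [ λ u(O) + H_i(O, p_i) ], F(u(O), p) } ≤ 0. (2) If v ∈ LSC(Γ) is a viscosity supersolution of problem (P) and q = (q_1,…,q_N) ∈ D⁻v(O), then max{ max_{i∈𝒟} [ λ v(O) + H_i(O, q_i) ], F(v(O), q) } ≥ 0. -/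
open Set Filter Topology

namespace Paper

variable {N : ℕ}

/-- One-dimensional (first-order) superdifferential at `0⁺` of `w : [0,∞) → ℝ`:
`p ∈ D⁺w(0)` iff `w(t) ≤ w(0) + p t + o(t)` as `t → 0⁺`. -/
def D1plus (w : ℝ → ℝ) : Set ℝ :=
  {p | ∀ ε > 0, ∀ᶠ t in 𝓝[>] (0:ℝ), w t ≤ w 0 + p * t + ε * t}

/-- One-dimensional (first-order) subdifferential at `0⁺`:
`q ∈ D⁻w(0)` iff `w(t) ≥ w(0) + q t + o(t)` as `t → 0⁺`. -/
def D1minus (w : ℝ → ℝ) : Set ℝ :=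
  {q | ∀ ε > 0, ∀ᶠ t in 𝓝[>] (0:ℝ), w 0 + q * t - ε * t ≤ w t}

/-- `limsup_{t→0⁺} (w(t) − w(0))/t`, as an extended real. -/
noncomputable def diffQuotLimsup (w : ℝ → ℝ) : EReal :=
  Filter.limsup (fun t : ℝ => (((w t - w 0) / t : ℝ) : EReal)) (𝓝[>] (0:ℝ))

/-- `liminf_{t→0⁺} (w(t) − w(0))/t`, as an extended real. -/
noncomputable def diffQuotLiminf (w : ℝ → ℝ) : EReal :=
  Filter.liminf (fun t : ℝ => (((w t - w 0) / t : ℝ) : EReal)) (𝓝[>] (0:ℝ))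

/-! A slope `p_i ∈ D⁺u_i(O)` controls `u_i` only up to `o(t)`, so the test function of slopes `p`
need not touch `u` from above at `O`. Slopes `p_i + ε` together with a concave term `−(M_i/2) t²`
do, for every `M_i`. On an edge with `a_i(O) > 0` take `a_i(O) M_i > |λu(O) + H_i(O, p_i + ε)|`:
then `G_i > 0` there, so the junction condition holds through a degenerate edge or through `F`.
The resulting disjunction of finitely many closed conditions on `ε` passes to `ε → 0⁺` by
continuity of `H_i(O, ·)` and `F`. -/

theorem Data.continuous_H (D : Data N) {i : Fin N} {t : ℝ} (ht : t ∈ Icc 0 (D.ℓ i)) :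
    Continuous (D.H i t) :=
  (D.H_cont i).comp_continuous (continuous_const.prodMk continuous_id) fun _ => ⟨ht, trivial⟩

theorem Data.continuous_F (D : Data N) (r : ℝ) : Continuous (D.F r) :=
  D.F_cont.comp (continuous_const.prodMk continuous_id)

theorem exists_or_forall_of_forall_pos {ι : Type*} [Finite ι] {P : ι → Prop}
    {f f' g g' : ι → ℝ → ℝ} (hf : ∀ i, Continuous (f i)) (hf' : ∀ i, Continuous (f' i))
    (hg : ∀ i, Continuous (g i)) (hg' : ∀ i, Continuous (g' i))
    (h : ∀ ε > 0, (∃ i, P i ∧ f i ε ≤ f' i ε) ∨ ∀ i, g i ε ≤ g' i ε) :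
    (∃ i, P i ∧ f i 0 ≤ f' i 0) ∨ ∀ i, g i 0 ≤ g' i 0 := by
  have hclosed : IsClosed {ε | (∃ i, P i ∧ f i ε ≤ f' i ε) ∨ ∀ i, g i ε ≤ g' i ε} := by
    simp only [ofPred_or, ofPred_exists, ofPred_and, ofPred_forall]
    exact (isClosed_iUnion_of_finite fun i =>
      isClosed_const.inter (isClosed_le (hf i) (hf' i))).union
      (isClosed_iInter fun i => isClosed_le (hg i) (hg' i))
  exact hclosed.mem_of_tendsto (tendsto_nhdsWithin_of_tendsto_nhds tendsto_id)
    ((eventually_mem_nhdsWithin (s := Ioi 0)).mono h)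

theorem eventually_le_of_mem_D1plus {w : ℝ → ℝ} {p ε : ℝ} (hp : p ∈ D1plus w) (hε : 0 < ε)
    (c : ℝ) : ∀ᶠ t in 𝓝[>] (0 : ℝ), w t ≤ w 0 + (p + ε) * t + c * t ^ 2 := by
  have hct : ∀ᶠ t in 𝓝[>] (0 : ℝ), -c * t ≤ ε / 2 :=
    ((continuous_const_mul (-c)).tendsto' 0 0 (mul_zero _)).mono_left nhdsWithin_le_nhds
      |>.eventually (eventually_le_nhds (half_pos hε))
  filter_upwards [hp (ε / 2) (half_pos hε), hct, self_mem_nhdsWithin] with t hw hc (ht : 0 < t)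
  nlinarith [mul_le_mul_of_nonneg_right hc ht.le]

theorem eventually_le_of_mem_D1minus {w : ℝ → ℝ} {q ε : ℝ} (hq : q ∈ D1minus w) (hε : 0 < ε)
    (c : ℝ) : ∀ᶠ t in 𝓝[>] (0 : ℝ), w 0 + (q - ε) * t + c * t ^ 2 ≤ w t := by
  have hct : ∀ᶠ t in 𝓝[>] (0 : ℝ), c * t ≤ ε / 2 :=
    ((continuous_const_mul c).tendsto' 0 0 (mul_zero c)).mono_left nhdsWithin_le_nhds
      |>.eventually (eventually_le_nhds (half_pos hε))
  filter_upwards [hq (ε / 2) (half_pos hε), hct, self_mem_nhdsWithin] with t hw hc (ht : 0 < t)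
  nlinarith [mul_le_mul_of_nonneg_right hc ht.le]

theorem exists_pos_forall_of_eventually_nhdsGT {ι : Type*} [Finite ι] {Q : ι → ℝ → Prop}
    (h : ∀ j, ∀ᶠ t in 𝓝[>] (0 : ℝ), Q j t) : ∃ δ > 0, ∀ j, ∀ t ∈ Ioo 0 δ, Q j t := by
  obtain ⟨δ, hδ, hsub⟩ := mem_nhdsGT_iff_exists_Ioo_subset.1 (eventually_all.2 h)
  exact ⟨δ, hδ, fun j t ht => hsub ht j⟩

theorem localMaxO_of_eventually {D : Data N} {w : Fin N → ℝ → ℝ}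
    (h : ∀ j, ∀ᶠ t in 𝓝[>] (0 : ℝ), w j t ≤ w j 0) : LocalMaxO D w := by
  obtain ⟨δ, hδ, hle⟩ := exists_pos_forall_of_eventually_nhdsGT h
  refine ⟨δ, hδ, fun j s hs hsδ => ?_⟩
  rcases hs.1.eq_or_lt with rfl | hs0
  · exact le_rfl
  · exact hle j s ⟨hs0, hsδ⟩

theorem localMinO_of_eventually {D : Data N} {w : Fin N → ℝ → ℝ}
    (h : ∀ j, ∀ᶠ t in 𝓝[>] (0 : ℝ), w j 0 ≤ w j t) : LocalMinO D w := by
  obtain ⟨δ, hδ, hle⟩ := exists_pos_forall_of_eventually_nhdsGT h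
  refine ⟨δ, hδ, fun j s hs hsδ => ?_⟩
  rcases hs.1.eq_or_lt with rfl | hs0
  · exact le_rfl
  · exact hle j s ⟨hs0, hsδ⟩

noncomputable def quadratic (c b X t : ℝ) : ℝ := c + b * t + X / 2 * t ^ 2

theorem hasDerivAt_quadratic (c b X t : ℝ) : HasDerivAt (quadratic c b X) (b + X * t) t := by
  have h := (((hasDerivAt_id t).const_mul b).const_add c).add
    ((hasDerivAt_pow 2 t).const_mul (X / 2))
  exact h.congr_deriv (by
    simp only [mul_one, Nat.cast_ofNat, Nat.add_one_sub_one, pow_one, add_right_inj]; ring)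

theorem deriv_quadratic (c b X : ℝ) : deriv (quadratic c b X) = fun t => b + X * t :=
  funext fun t => (hasDerivAt_quadratic c b X t).deriv

theorem deriv_deriv_quadratic (c b X t : ℝ) : deriv (deriv (quadratic c b X)) t = X := by
  rw [deriv_quadratic]
  exact (((hasDerivAt_id t).const_mul X).const_add b).deriv.trans (mul_one X)

theorem contDiff_quadratic (c b X : ℝ) : ContDiff ℝ 2 (quadratic c b X) := by
  unfold quadratic; fun_prop

theorem isTest_quadratic {u : Fin N → ℝ → ℝ} (hu : Glued u) (b X : Fin N → ℝ) :
    IsTest fun i => quadratic (u i 0) (b i) (X i) :=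
  ⟨fun i j => by simpa [quadratic] using hu i j, fun i => contDiff_quadratic _ _ _⟩

theorem IsSubsol.junction_of_eventually_le_quadratic {D : Data N} {u : Fin N → ℝ → ℝ}
    (hu : IsSubsol D u) (b X : Fin N → ℝ)
    (hle : ∀ j, ∀ᶠ t in 𝓝[>] (0 : ℝ), u j t ≤ quadratic (u j 0) (b j) (X j) t) :
    (∃ i, G D i (u i 0) (b i) (X i) 0 ≤ 0) ∨ ∀ i, D.F (u i 0) b ≤ 0 := by
  have hmax : LocalMaxO D fun j s => u j s - quadratic (u j 0) (b j) (X j) s :=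
    localMaxO_of_eventually fun j => (hle j).mono fun t ht => by simpa [quadratic] using ht
  simpa [deriv_quadratic, deriv_deriv_quadratic] using
    (hu.2.2 _ (isTest_quadratic hu.2.1 b X)).2.1 hmax

theorem IsSupersol.junction_of_eventually_quadratic_le {D : Data N} {v : Fin N → ℝ → ℝ}
    (hv : IsSupersol D v) (b X : Fin N → ℝ)
    (hle : ∀ j, ∀ᶠ t in 𝓝[>] (0 : ℝ), quadratic (v j 0) (b j) (X j) t ≤ v j t) :
    (∃ i, 0 ≤ G D i (v i 0) (b i) (X i) 0) ∨ ∀ i, 0 ≤ D.F (v i 0) b := by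
  have hmin : LocalMinO D fun j s => v j s - quadratic (v j 0) (b j) (X j) s :=
    localMinO_of_eventually fun j => (hle j).mono fun t ht => by simpa [quadratic] using ht
  simpa [deriv_quadratic, deriv_deriv_quadratic] using
    (hv.2.2 _ (isTest_quadratic hv.2.1 b X)).2.1 hmin

theorem IsSubsol.junction_of_mem_D1plus_add {D : Data N} {u : Fin N → ℝ → ℝ}
    {p : Fin N → ℝ} (hu : IsSubsol D u) (hp : ∀ i, p i ∈ D1plus (u i)) {ε : ℝ} (hε : 0 < ε) :
    (∃ i, D.a i 0 = 0 ∧ D.lam * u i 0 + D.H i 0 (p i + ε) ≤ 0) ∨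
      ∀ i, D.F (u i 0) (fun j => p j + ε) ≤ 0 := by
  set A : Fin N → ℝ := fun i => D.lam * u i 0 + D.H i 0 (p i + ε)
  -- `x / 0 = 0`: the curvature vanishes on the degenerate edges.
  set X : Fin N → ℝ := fun i => -((|A i| + 1) / D.a i 0)
  refine (hu.junction_of_eventually_le_quadratic (fun j => p j + ε) X fun j =>
    eventually_le_of_mem_D1plus (hp j) hε _).imp (fun ⟨i, hi⟩ => ?_) id
  have ha : D.a i 0 = 0 := by
    by_contra ha
    have hG : G D i (u i 0) (p i + ε) (X i) 0 = A i + (|A i| + 1) := by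
      simp only [G, X, A, mul_neg, mul_div_cancel₀ _ ha]
      ring
    linarith [neg_abs_le (A i)]
  exact ⟨i, ha, by simpa [G, ha] using hi⟩

theorem IsSupersol.junction_of_mem_D1minus_sub {D : Data N} {v : Fin N → ℝ → ℝ}
    {q : Fin N → ℝ} (hv : IsSupersol D v) (hq : ∀ i, q i ∈ D1minus (v i)) {ε : ℝ} (hε : 0 < ε) :
    (∃ i, D.a i 0 = 0 ∧ 0 ≤ D.lam * v i 0 + D.H i 0 (q i - ε)) ∨
      ∀ i, 0 ≤ D.F (v i 0) (fun j => q j - ε) := by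
  set A : Fin N → ℝ := fun i => D.lam * v i 0 + D.H i 0 (q i - ε)
  set X : Fin N → ℝ := fun i => (|A i| + 1) / D.a i 0
  refine (hv.junction_of_eventually_quadratic_le (fun j => q j - ε) X fun j =>
    eventually_le_of_mem_D1minus (hq j) hε _).imp (fun ⟨i, hi⟩ => ?_) id
  have ha : D.a i 0 = 0 := by
    by_contra ha
    have hG : G D i (v i 0) (q i - ε) (X i) 0 = A i - (|A i| + 1) := by
      simp only [G, X, A, mul_div_cancel₀ _ ha]
      ring
    linarith [le_abs_self (A i)]
  exact ⟨i, ha, by simpa [G, ha] using hi⟩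

theorem IsSubsol.junction_of_mem_D1plus {D : Data N} {u : Fin N → ℝ → ℝ}
    {p : Fin N → ℝ} (hu : IsSubsol D u) (hp : ∀ i, p i ∈ D1plus (u i)) :
    (∃ i, D.a i 0 = 0 ∧ D.lam * u i 0 + D.H i 0 (p i) ≤ 0) ∨ ∀ i, D.F (u i 0) p ≤ 0 := by
  simpa using exists_or_forall_of_forall_pos (P := fun i => D.a i 0 = 0)
    (f := fun i ε => D.lam * u i 0 + D.H i 0 (p i + ε)) (f' := fun _ _ => 0)
    (g := fun i ε => D.F (u i 0) fun j => p j + ε) (g' := fun _ _ => 0)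
    (fun i => continuous_const.add
      ((D.continuous_H (left_mem_Icc.2 (D.ℓ_pos i).le)).comp (continuous_const_add _)))
    (fun _ => continuous_const)
    (fun i => (D.continuous_F _).comp (continuous_pi fun j => continuous_const_add _))
    (fun _ => continuous_const) (fun _ hε => hu.junction_of_mem_D1plus_add hp hε)

theorem IsSupersol.junction_of_mem_D1minus {D : Data N} {v : Fin N → ℝ → ℝ}
    {q : Fin N → ℝ} (hv : IsSupersol D v) (hq : ∀ i, q i ∈ D1minus (v i)) :
    (∃ i, D.a i 0 = 0 ∧ 0 ≤ D.lam * v i 0 + D.H i 0 (q i)) ∨ ∀ i, 0 ≤ D.F (v i 0) q := by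
  simpa using exists_or_forall_of_forall_pos (P := fun i => D.a i 0 = 0)
    (f := fun _ _ => 0) (f' := fun i ε => D.lam * v i 0 + D.H i 0 (q i - ε))
    (g := fun _ _ => 0) (g' := fun i ε => D.F (v i 0) fun j => q j - ε)
    (fun _ => continuous_const)
    (fun i => continuous_const.add
      ((D.continuous_H (left_mem_Icc.2 (D.ℓ_pos i).le)).comp (continuous_sub_left _)))
    (fun _ => continuous_const)
    (fun i => (D.continuous_F _).comp (continuous_pi fun j => continuous_sub_left _))
    (fun _ hε => hv.junction_of_mem_D1minus_sub hq hε)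

/-- Proposition 3.3, junction conditions via first-order
sub/superdifferentials.  Assuming only continuity of the data, the junction
inequalities hold for every `p ∈ D⁺u(O)` (resp. `q ∈ D⁻v(O)`), involving only
the degenerate edges. -/
theorem junction_condition_subdifferential (N : ℕ) (D : Data N) :
    (∀ (u : Fin N → ℝ → ℝ) (p : Fin N → ℝ), IsSubsol D u →
      (∀ i, p i ∈ D1plus (u i)) →
      (∃ i, D.a i 0 = 0 ∧ D.lam * u i 0 + D.H i 0 (p i) ≤ 0) ∨
      (∀ i, D.F (u i 0) p ≤ 0)) ∧
    (∀ (v : Fin N → ℝ → ℝ) (q : Fin N → ℝ), IsSupersol D v →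
      (∀ i, q i ∈ D1minus (v i)) →
      (∃ i, D.a i 0 = 0 ∧ 0 ≤ D.lam * v i 0 + D.H i 0 (q i)) ∨
      (∀ i, 0 ≤ D.F (v i 0) q)) :=
  ⟨fun _ _ hu hp => hu.junction_of_mem_D1plus hp, fun _ _ hv hq => hv.junction_of_mem_D1minus hq⟩

end Paper
end

section
/- Attainment of the Dirichlet condition at nondegenerate boundary vertices: assume the steady assumptions. Let u ∈ USC(Γ) be a viscosity subsolution and v ∈ LSC(Γ) a viscosity supersolution of problem (P). If a_i(v_i) > 0 for some 1 ≤ i ≤ N, then u(v_i) ≤ h_i ≤ v(v_i). -/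
open Set Filter Topology

namespace Paper

variable {N : ℕ}

/-!
Near a boundary vertex `ℓ` where the diffusion is positive, test a subsolution `u` with the
concave quadratic `φₙ(s) = n (ℓ - s) (2δ - (ℓ - s))`: then `-a φₙ'' = 2 n a ≥ n a(ℓ)` on
`[ℓ - δ, ℓ]`, while `|φₙ'| ≤ 2 n δ`, so for `δ` small the Lipschitz Hamiltonian cannot compensate
and the equation fails at every maximum point of `u - φₙ` once `n` is large. Since `φₙ` grows like
`n δ (ℓ - s)` away from `ℓ`, such a maximum point lies in `(ℓ - δ, ℓ]`; it cannot be interior, so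
it is the vertex, where only the Dirichlet alternative `u(ℓ) ≤ h` remains. The supersolution case
is the subsolution case for `-v` and the Hamiltonian `-H(t, -p)`.
-/

theorem exists_pos_forall_abs_sub_lt_of_eventually {P : ℝ → Prop} {s : Set ℝ} {t : ℝ}
    (h : ∀ᶠ x in 𝓝[s] t, P x) : ∃ δ > 0, ∀ x ∈ s, |x - t| < δ → P x := by
  obtain ⟨δ, hδ, hP⟩ := Metric.eventually_nhds_iff.1 (eventually_nhdsWithin_iff.1 h)
  exact ⟨δ, hδ, fun x hx hxt => hP (by rwa [Real.dist_eq]) hx⟩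

theorem eventually_forall_Icc_of_eventually_nhdsWithin {P : ℝ → Prop} {L : ℝ} (hL : 0 < L)
    (h : ∀ᶠ x in 𝓝[Icc 0 L] L, P x) : ∀ᶠ δ in 𝓝[>] 0, ∀ t ∈ Icc (L - δ) L, P t := by
  obtain ⟨ε, hε, hP⟩ := exists_pos_forall_abs_sub_lt_of_eventually h
  filter_upwards [Ioo_mem_nhdsGT (lt_min hε hL)] with δ hδ t ht
  have hδ' := lt_min_iff.1 hδ.2
  exact hP t ⟨by linarith [ht.1], ht.2⟩
    (by rw [abs_sub_comm, abs_of_nonneg (by linarith [ht.2])]; linarith [ht.1])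

/-- `w` is a viscosity subsolution of `lam * w - a * w'' + H(t, w') = 0` on `(0, L]`, with the
Dirichlet condition `w ≤ h` at `L` in the relaxed (generalized) sense. -/
def IsEdgeSubsol (lam h L : ℝ) (a : ℝ → ℝ) (H : ℝ → ℝ → ℝ) (w : ℝ → ℝ) : Prop :=
  ∀ φ : ℝ → ℝ, ContDiff ℝ 2 φ →
    (∀ t ∈ Ioo 0 L, IsLocalMaxOn (w - φ) (Icc 0 L) t →
      lam * w t - a t * deriv (deriv φ) t + H t (deriv φ t) ≤ 0) ∧
    (IsLocalMaxOn (w - φ) (Icc 0 L) L →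
      lam * w L - a L * deriv (deriv φ) L + H L (deriv φ L) ≤ 0 ∨ w L ≤ h)

def vertexPenalty (L δ n s : ℝ) : ℝ := n * (L - s) * (2 * δ - (L - s))

theorem contDiff_vertexPenalty (L δ n : ℝ) : ContDiff ℝ 2 (vertexPenalty L δ n) := by
  unfold vertexPenalty
  fun_prop

theorem deriv_vertexPenalty (L δ n : ℝ) :
    deriv (vertexPenalty L δ n) = fun s => -2 * n * (δ - (L - s)) := by
  funext s
  have h : HasDerivAt (vertexPenalty L δ n)
      (n * (-1) * (2 * δ - (L - s)) + n * (L - s) * (-(-1))) s :=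
    (((hasDerivAt_id s).const_sub L).const_mul n).mul (((hasDerivAt_id s).const_sub L).const_sub _)
  rw [h.deriv]
  ring

theorem deriv_deriv_vertexPenalty (L δ n : ℝ) :
    deriv (deriv (vertexPenalty L δ n)) = fun _ => -2 * n := by
  funext s
  have h : HasDerivAt (fun s => -2 * n * (δ - (L - s))) (-2 * n * (-(-1))) s :=
    (((hasDerivAt_id s).const_sub L).const_sub δ).const_mul _
  rw [deriv_vertexPenalty, h.deriv]
  ring

theorem mul_le_vertexPenalty {L δ n s : ℝ} (hn : 0 ≤ n) (hs : s ∈ Icc (L - δ) L) :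
    n * δ * (L - s) ≤ vertexPenalty L δ n s := by
  have : 0 ≤ n * (L - s) := mul_nonneg hn (by linarith [hs.2])
  unfold vertexPenalty
  nlinarith [hs.1]

theorem eventually_exists_isLocalMaxOn_sub_vertexPenalty {w : ℝ → ℝ} {L δ : ℝ}
    (hw : UpperSemicontinuousOn w (Icc 0 L)) (hδ : 0 < δ) (hδL : δ ≤ L) :
    ∀ᶠ n in atTop, ∃ t ∈ Ioc (L - δ) L,
      IsLocalMaxOn (w - vertexPenalty L δ n) (Icc 0 L) t ∧ w L ≤ w t := by
  have hK : Icc (L - δ) L ⊆ Icc 0 L := Icc_subset_Icc (by linarith) le_rfl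
  have hLK : L ∈ Icc (L - δ) L := ⟨by linarith, le_rfl⟩
  obtain ⟨M, hM⟩ := (hw.mono hK).bddAbove_of_isCompact isCompact_Icc
  filter_upwards [eventually_ge_atTop 0, eventually_gt_atTop ((M - w L) / δ ^ 2)] with n hn hnM
  have husc : UpperSemicontinuousOn (w - vertexPenalty L δ n) (Icc (L - δ) L) :=
    (hw.mono hK).add (contDiff_vertexPenalty L δ n).continuous.neg.continuousOn.upperSemicontinuousOn
  obtain ⟨t, htK, htmax⟩ := husc.exists_isMaxOn ⟨L, hLK⟩ isCompact_Icc
  have hgain : n * δ * (L - t) ≤ w t - w L := by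
    have hL : w L - vertexPenalty L δ n L ≤ w t - vertexPenalty L δ n t := htmax hLK
    have h0 : vertexPenalty L δ n L = 0 := by simp [vertexPenalty]
    linarith [mul_le_vertexPenalty hn htK]
  have hLt : L - δ < t := by
    have hwt : w t ≤ M := hM ⟨t, htK, rfl⟩
    rw [div_lt_iff₀ (by positivity)] at hnM
    by_contra! htδ
    nlinarith [mul_le_mul_of_nonneg_left (show δ ≤ L - t by linarith) (mul_nonneg hn hδ.le)]
  have hgain_nonneg : 0 ≤ n * δ * (L - t) := mul_nonneg (mul_nonneg hn hδ.le) (by linarith [htK.2])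
  refine ⟨t, ⟨hLt, htK.2⟩, ?_, by linarith⟩
  filter_upwards [self_mem_nhdsWithin, nhdsWithin_le_nhds (Ioi_mem_nhds hLt)] with x hx hxK
  exact htmax ⟨le_of_lt hxK, hx.2⟩

theorem IsEdgeSubsol.le_of_pos {lam h L C : ℝ} {a w : ℝ → ℝ} {H : ℝ → ℝ → ℝ}
    (hsub : IsEdgeSubsol lam h L a H w) (hw : UpperSemicontinuousOn w (Icc 0 L))
    (hL : 0 < L) (hlam : 0 ≤ lam) (ha : ContinuousWithinAt a (Icc 0 L) L) (haL : 0 < a L)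
    (hH0 : ContinuousWithinAt (fun t => H t 0) (Icc 0 L) L)
    (hHlip : ∀ t ∈ Icc 0 L, ∀ p q, |H t p - H t q| ≤ C * |p - q|) : w L ≤ h := by
  have hC : 0 ≤ C := by simpa using (abs_nonneg _).trans (hHlip L ⟨hL.le, le_rfl⟩ 1 0)
  have hsmall : ∀ᶠ δ in 𝓝[>] (0 : ℝ), δ ≤ L ∧ 2 * C * δ < a L / 2 :=
    nhdsWithin_le_nhds ((eventually_le_nhds hL).and
      ((continuous_const.mul continuous_id).continuousAt.eventually_lt continuousAt_const
        (by simpa using half_pos haL)))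
  obtain ⟨δ, ⟨hbounds, hδL, hCδ⟩, hδ⟩ :=
    (((eventually_forall_Icc_of_eventually_nhdsWithin hL
      ((ha.eventually (lt_mem_nhds (half_lt_self haL))).and
        (hH0.eventually (lt_mem_nhds (sub_one_lt (H L 0)))))).and hsmall).and
      self_mem_nhdsWithin).exists
  -- the diffusion term `2 n a t ≥ n a L` beats the growth `2 n C δ < n a L / 2` of `H`
  have hpos : ∀ᶠ n in atTop, ∀ t ∈ Icc (L - δ) L, w L ≤ w t →
      0 < lam * w t - a t * (-2 * n) + H t (-2 * n * (δ - (L - t))) := by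
    filter_upwards [eventually_ge_atTop 0,
      eventually_gt_atTop ((1 - lam * w L - H L 0) / (a L / 2))] with n hn hnlarge t ht hwt
    obtain ⟨hat, hHt⟩ := hbounds t ht
    rw [div_lt_iff₀ (half_pos haL)] at hnlarge
    have hslope : |-2 * n * (δ - (L - t)) - 0| ≤ 2 * n * δ := by
      rw [sub_zero, abs_le]
      constructor <;> nlinarith [ht.1, ht.2]
    have hH : H t 0 - 2 * n * C * δ ≤ H t (-2 * n * (δ - (L - t))) := by
      have := (abs_le.1 (hHlip t ⟨by linarith [ht.1], ht.2⟩ (-2 * n * (δ - (L - t))) 0)).1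
      nlinarith [mul_le_mul_of_nonneg_left hslope hC]
    nlinarith [mul_le_mul_of_nonneg_left hwt hlam, mul_le_mul_of_nonneg_left hat.le hn,
      mul_le_mul_of_nonneg_left hCδ.le hn]
  obtain ⟨n, hGpos, t, ht, htmax, hwt⟩ :=
    (hpos.and (eventually_exists_isLocalMaxOn_sub_vertexPenalty hw hδ hδL)).exists
  obtain ⟨hint, hvert⟩ := hsub _ (contDiff_vertexPenalty L δ n)
  simp only [deriv_deriv_vertexPenalty] at hint hvert
  simp only [deriv_vertexPenalty] at hint hvert
  have hGt := hGpos t (Ioc_subset_Icc_self ht) hwt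
  rcases ht.2.lt_or_eq with htL | rfl
  · exact absurd (hint t ⟨by linarith [ht.1], htL⟩ htmax) hGt.not_ge
  · exact (hvert htmax).resolve_left hGt.not_ge

theorem IsSubsol.isEdgeSubsol {D : Data N} {u : Fin N → ℝ → ℝ} (hu : IsSubsol D u)
    (i : Fin N) : IsEdgeSubsol D.lam (D.h i) (D.ℓ i) (D.a i) (D.H i) (u i) := by
  intro φ hφ
  obtain ⟨hint, -, hvert⟩ := hu.2.2 (fun _ => φ) ⟨fun _ _ => rfl, fun _ => hφ⟩
  refine ⟨fun t ht hmax => hint i t ht (exists_pos_forall_abs_sub_lt_of_eventually hmax),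
    fun hmax => hvert i ?_⟩
  obtain ⟨δ, hδ, hle⟩ := exists_pos_forall_abs_sub_lt_of_eventually hmax
  exact ⟨δ, hδ, fun s hs hsL => hle s hs (by rwa [abs_sub_comm, abs_of_nonneg (by linarith [hs.2])])⟩

theorem IsSupersol.isEdgeSubsol_neg {D : Data N} {v : Fin N → ℝ → ℝ} (hv : IsSupersol D v)
    (i : Fin N) :
    IsEdgeSubsol D.lam (-D.h i) (D.ℓ i) (D.a i) (fun t p => -D.H i t (-p)) (-v i) := by
  intro φ hφ
  obtain ⟨hint, -, hvert⟩ := hv.2.2 (fun _ => -φ) ⟨fun _ _ => rfl, fun _ => hφ.neg⟩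
  have hmin {t : ℝ} (hmax : IsLocalMaxOn (-v i - φ) (Icc 0 (D.ℓ i)) t) :
      ∃ δ > 0, ∀ s ∈ Icc 0 (D.ℓ i), |s - t| < δ → v i t - -φ t ≤ v i s - -φ s := by
    obtain ⟨δ, hδ, hle⟩ := exists_pos_forall_abs_sub_lt_of_eventually hmax
    refine ⟨δ, hδ, fun s hs hst => ?_⟩
    have := hle s hs hst
    simp only [Pi.sub_apply, Pi.neg_apply] at this
    linarith
  simp only [G, deriv.neg', deriv.fun_neg'] at hint hvert
  refine ⟨fun t ht hmax => ?_, fun hmax => ?_⟩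
  · have := hint i t ht (hmin hmax)
    simp only [Pi.neg_apply]
    linarith
  · obtain ⟨δ, hδ, hle⟩ := hmin hmax
    rcases hvert i ⟨δ, hδ, fun s hs hsL => hle s hs (by
      rwa [abs_sub_comm, abs_of_nonneg (by linarith [hs.2])])⟩ with hG | hh
    · left; simp only [Pi.neg_apply]; linarith
    · right; simp only [Pi.neg_apply]; linarith

/-- Proposition 3.4 (i), attainment of the Dirichlet condition
at nondegenerate boundary vertices.  Under the steady assumptions, if
`a_i(v_i) > 0` then `u(v_i) ≤ h_i ≤ v(v_i)` for every subsolution `u` and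
supersolution `v` of (P). -/
theorem dirichlet_nondegenerate (N : ℕ) (D : Data N) (C : ℝ)
    (hSteady : Steady D C)
    (u v : Fin N → ℝ → ℝ) (hu : IsSubsol D u) (hv : IsSupersol D v)
    (i : Fin N) (hai : 0 < D.a i (D.ℓ i)) :
    u i (D.ℓ i) ≤ D.h i ∧ D.h i ≤ v i (D.ℓ i) := by
  obtain ⟨-, hHam, -⟩ := hSteady
  have hL : 0 < D.ℓ i := D.ℓ_pos i
  have hLmem : D.ℓ i ∈ Icc 0 (D.ℓ i) := ⟨hL.le, le_rfl⟩
  have ha := D.a_cont i _ hLmem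
  have hH0 : ContinuousWithinAt (fun t => D.H i t 0) (Icc 0 (D.ℓ i)) (D.ℓ i) :=
    (D.H_cont i).comp (continuousOn_id.prodMk continuousOn_const)
      (fun t ht => ⟨ht, mem_univ _⟩) _ hLmem
  have hHlip := (hHam i).2
  refine ⟨(hu.isEdgeSubsol i).le_of_pos (hu.1 i) hL D.lam_pos.le ha hai hH0 hHlip, ?_⟩
  have hv_neg : -v i (D.ℓ i) ≤ -D.h i :=
    (hv.isEdgeSubsol_neg i).le_of_pos
      (continuous_neg.comp_lowerSemicontinuousOn_antitone (hv.1 i) fun _ _ => neg_le_neg)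
      hL D.lam_pos.le ha hai (by simp only [neg_zero]; exact hH0.neg) fun t ht p q => by
        simpa [abs_sub_comm, add_comm, sub_eq_add_neg] using hHlip t ht (-q) (-p)
  linarith

end Paper
end
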